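/- arXiv:2412.20114 — 7 statements merged into one kernel-verified Lean document; each statement's English description precedes it below -/
import Mathlib

section
/- Let n ≥ 1, 1 ≤ d ≤ n, and let F be a field whose characteristic is 0 or strictly greater than max(2^n, n^d). Let β ∈ F be such that β ≠ m·1_F for every natural number m with 0 ≤ m ≤ n^d. If f ∈ F[x_1,…,x_n] is multilinear and satisfies f(a) · (e_{d,n}(a) − β) = 1 for every Boolean point a ∈ {0,1}^n, then the total degree of f satisfies n − d < deg(f) ≤ n. -/
open MvPolynomial

section Aux

variable {F : Type*} [Field F] {n : ℕ}

lemma aux_prod_ind_pow (T : Finset (Fin n)) (m : Fin n →₀ ℕ) :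
    (∏ i, (if i ∈ T then (1:F) else 0) ^ m i) = if m.support ⊆ T then 1 else 0 := by
  by_cases h : m.support ⊆ T
  · rw [if_pos h]
    apply Finset.prod_eq_one
    intro i _
    by_cases hi : i ∈ T
    · rw [if_pos hi, one_pow]
    · have : m i = 0 := by
        by_contra hmi
        exact hi (h (Finsupp.mem_support_iff.2 hmi))
      rw [this, pow_zero]
  · rw [if_neg h]
    obtain ⟨i, hi, hiT⟩ := Finset.not_subset.1 h
    apply Finset.prod_eq_zero (Finset.mem_univ i)
    rw [if_neg hiT]
    exact zero_pow (Finsupp.mem_support_iff.1 hi)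

lemma aux_eval_ind (T : Finset (Fin n)) (f : MvPolynomial (Fin n) F) :
    eval (fun i => if i ∈ T then (1:F) else 0) f
      = ∑ m ∈ f.support, coeff m f * (if m.support ⊆ T then 1 else 0) := by
  rw [eval_eq']
  exact Finset.sum_congr rfl fun m _ => by rw [aux_prod_ind_pow]

lemma aux_eval_esymm (T : Finset (Fin n)) (d : ℕ) :
    eval (fun i => if i ∈ T then (1:F) else 0) (esymm (Fin n) F d)
      = (T.card.choose d : F) := by
  rw [esymm, map_sum]
  have h1 : ∀ S ∈ Finset.univ.powersetCard d,
      eval (fun i => if i ∈ T then (1:F) else 0) (∏ i ∈ S, (X i : MvPolynomial (Fin n) F))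
        = if S ⊆ T then 1 else 0 := by
    intro S _
    rw [map_prod]
    simp only [eval_X]
    by_cases h : S ⊆ T
    · rw [if_pos h]
      exact Finset.prod_eq_one fun i hi => if_pos (h hi)
    · rw [if_neg h]
      obtain ⟨i, hi, hiT⟩ := Finset.not_subset.1 h
      exact Finset.prod_eq_zero hi (if_neg hiT)
  rw [Finset.sum_congr rfl h1, Finset.sum_boole]
  congr 1
  rw [← Finset.card_powersetCard]
  congr 1
  ext S
  simp only [Finset.mem_filter, Finset.mem_powersetCard, Finset.subset_univ, true_and]
  exact ⟨fun ⟨h1, h2⟩ => ⟨h2, h1⟩, fun ⟨h1, h2⟩ => ⟨h2, h1⟩⟩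

lemma aux_count (S : Finset (Fin n)) (k : ℕ) (hs : S.card ≤ k) :
    ((Finset.univ.powersetCard k).filter (fun T => S ⊆ T)).card
      = (n - S.card).choose (k - S.card) := by
  have key : ((Finset.univ.powersetCard k).filter (fun T => S ⊆ T)).card
      = (Finset.powersetCard (k - S.card) Sᶜ).card := by
    apply Finset.card_bij' (fun T _ => T \ S) (fun U _ => U ∪ S)
    · intro T hT
      simp only [Finset.mem_filter, Finset.mem_powersetCard] at hT
      obtain ⟨⟨_, hcard⟩, hST⟩ := hT
      rw [Finset.mem_powersetCard]
      constructor
      · intro x hx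
        simp only [Finset.mem_sdiff] at hx
        simp [Finset.mem_compl, hx.2]
      · rw [Finset.card_sdiff_of_subset hST, hcard]
    · intro U hU
      rw [Finset.mem_powersetCard] at hU
      obtain ⟨hUc, hUcard⟩ := hU
      have hdisj : Disjoint U S := by
        rw [Finset.disjoint_left]
        intro x hx
        have := hUc hx
        simpa [Finset.mem_compl] using this
      simp only [Finset.mem_filter, Finset.mem_powersetCard]
      refine ⟨⟨Finset.subset_univ _, ?_⟩, Finset.subset_union_right⟩
      rw [Finset.card_union_of_disjoint hdisj, hUcard]
      omega
    · intro T hT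
      simp only [Finset.mem_filter] at hT
      exact Finset.sdiff_union_of_subset hT.2
    · intro U hU
      rw [Finset.mem_powersetCard] at hU
      have hdisj : Disjoint U S := by
        rw [Finset.disjoint_left]
        intro x hx
        have := hU.1 hx
        simpa [Finset.mem_compl] using this
      exact Finset.union_sdiff_cancel_right hdisj
  rw [key, Finset.card_powersetCard, Finset.card_compl, Fintype.card_fin]

lemma aux_desc_eval (k t : ℕ) :
    (∏ j ∈ Finset.range t, ((k:F) - (j:F))) = (k.descFactorial t : F) := by
  rcases le_or_gt t k with h | h
  · rw [Nat.descFactorial_eq_prod_range, Nat.cast_prod]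
    apply Finset.prod_congr rfl
    intro j hj
    rw [Finset.mem_range] at hj
    rw [Nat.cast_sub (le_of_lt (lt_of_lt_of_le hj h))]
  · rw [Nat.descFactorial_eq_zero_iff_lt.2 h, Nat.cast_zero]
    apply Finset.prod_eq_zero (Finset.mem_range.2 h)
    rw [sub_self]

end Aux

/-- Let `n ≥ 1`, `1 ≤ d ≤ n`, and let `F` be a field of characteristic `0` or
strictly greater than `max (2^n) (n^d)`. Let `β ∈ F` with `β ≠ m·1_F` for every natural number
`m ≤ n^d`. If `f` is multilinear and `f(a)·(e_{d,n}(a) − β) = 1` for every Boolean point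
`a ∈ {0,1}^n`, then `n − d < deg f ≤ n`. -/

theorem multilinear_inverse_of_esymm_sub_beta_degree_bounds
    (F : Type*) [Field F] (n d : ℕ) (hn : 1 ≤ n) (hd1 : 1 ≤ d) (hdn : d ≤ n)
    (hchar : ringChar F = 0 ∨ max (2 ^ n) (n ^ d) < ringChar F)
    (β : F) (hβ : ∀ m : ℕ, m ≤ n ^ d → (m : F) ≠ β)
    (f : MvPolynomial (Fin n) F)
    (hml : ∀ i : Fin n, f.degreeOf i ≤ 1)
    (hf : ∀ a : Fin n → F, (∀ i, a i = 0 ∨ a i = 1) →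
      eval a f * (eval a (esymm (Fin n) F d) - β) = 1) :
    n - d < f.totalDegree ∧ f.totalDegree ≤ n := by
  classical
  -- upper bound
  have hmono : ∀ m ∈ f.support, (m.sum fun _ e => e) ≤ n ∧ m.support.card ≤ m.sum fun _ e => e := by
    intro m hm
    have h1 : ∀ i, m i ≤ 1 := by
      intro i
      refine le_trans ?_ (hml i)
      rw [MvPolynomial.degreeOf_eq_sup]
      exact Finset.le_sup (f := fun m' => m' i) hm
    have h2 : (m.sum fun _ e => e) = ∑ i ∈ m.support, m i := rfl
    constructor
    · rw [h2]
      calc ∑ i ∈ m.support, m i ≤ ∑ i ∈ m.support, 1 :=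
            Finset.sum_le_sum fun i _ => h1 i
        _ = m.support.card := by simp
        _ ≤ n := by simpa using Finset.card_le_card (Finset.subset_univ m.support)
    · rw [h2]
      calc m.support.card = ∑ i ∈ m.support, 1 := by simp
        _ ≤ ∑ i ∈ m.support, m i :=
            Finset.sum_le_sum fun i hi => Nat.one_le_iff_ne_zero.2 (Finsupp.mem_support_iff.1 hi)
  have hub : f.totalDegree ≤ n := by
    rw [MvPolynomial.totalDegree]
    exact Finset.sup_le fun m hm => (hmono m hm).1
  refine ⟨?_, hub⟩
  by_contra hcon
  push_neg at hcon
  -- characteristic facts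
  obtain ⟨hfact, hpos, hinj⟩ :
      (∀ t : ℕ, t ≤ n → ((Nat.factorial t : ℕ) : F) ≠ 0) ∧
      (∀ m : ℕ, 0 < m → m ≤ 2 ^ n → ((m : ℕ) : F) ≠ 0) ∧
      (∀ k k' : ℕ, k ≤ n → k' ≤ n → ((k : ℕ) : F) = ((k' : ℕ) : F) → k = k') := by
    rcases hchar with h0 | hlt
    · haveI : CharZero F := by
        haveI := ringChar.charP F
        rw [h0] at this
        exact CharP.charP_to_charZero F
      refine ⟨fun t _ => Nat.cast_ne_zero.2 t.factorial_ne_zero,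
        fun m hm _ => Nat.cast_ne_zero.2 hm.ne', fun k k' _ _ h => Nat.cast_injective h⟩
    · set p := ringChar F with hp
      haveI hcp : CharP F p := ringChar.charP F
      have hppos : 0 < p := lt_trans (lt_of_lt_of_le (by positivity) (le_max_left _ _)) hlt
      have hprime : p.Prime := by
        rcases CharP.char_is_prime_or_zero F p with h | h
        · exact h
        · omega
      have h2n : 2 ^ n < p := lt_of_le_of_lt (le_max_left _ _) hlt
      have hnlt : n < p := lt_of_lt_of_le (Nat.lt_two_pow_self (n := n)) (le_of_lt h2n)
      have hdvd : ∀ m : ℕ, ((m : ℕ) : F) = 0 ↔ p ∣ m := fun m => CharP.cast_eq_zero_iff F p m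
      refine ⟨?_, ?_, ?_⟩
      · intro t ht hcast
        have h1 := (hdvd _).1 hcast
        have := (Nat.Prime.dvd_factorial hprime).1 h1
        omega
      · intro m hm hle hcast
        have := Nat.le_of_dvd hm ((hdvd _).1 hcast)
        omega
      · intro k k' hk hk' h
        by_contra hne
        rcases Nat.lt_or_ge k k' with hlt' | hge
        · have h1 : ((k' - k : ℕ) : F) = 0 := by
            rw [Nat.cast_sub (le_of_lt hlt'), h, sub_self]
          have := Nat.le_of_dvd (by omega) ((hdvd _).1 h1)
          omega
        · have hlt'' : k' < k := by omega
          have h1 : ((k - k' : ℕ) : F) = 0 := by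
            rw [Nat.cast_sub (le_of_lt hlt''), h, sub_self]
          have := Nat.le_of_dvd (by omega) ((hdvd _).1 h1)
          omega
  have hchoose2n : ∀ k : ℕ, k ≤ n → ((n.choose k : ℕ) : F) ≠ 0 := by
    intro k hk
    apply hpos _ (Nat.choose_pos hk)
    rw [← Nat.sum_range_choose n]
    exact Finset.single_le_sum (fun i _ => Nat.zero_le _) (Finset.mem_range.2 (by omega))
  -- values on the Boolean cube
  have hval : ∀ T : Finset (Fin n),
      eval (fun i => if i ∈ T then (1:F) else 0) f * (((T.card.choose d : ℕ) : F) - β) = 1 := by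
    intro T
    have := hf (fun i => if i ∈ T then (1:F) else 0)
      (fun i => by by_cases h : i ∈ T <;> simp [h])
    rwa [aux_eval_esymm] at this
  have hvalT : ∀ T : Finset (Fin n),
      eval (fun i => if i ∈ T then (1:F) else 0) f = ((((T.card.choose d : ℕ) : F)) - β)⁻¹ :=
    fun T => eq_inv_of_mul_eq_one_left (hval T)
  have hlevel : ∀ T T' : Finset (Fin n), T.card = T'.card →
      eval (fun i => if i ∈ T then (1:F) else 0) f
        = eval (fun i => if i ∈ T' then (1:F) else 0) f := by
    intro T T' h
    rw [hvalT, hvalT, h]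
  -- binomial polynomials
  set B : ℕ → Polynomial F := fun t => Polynomial.C (((Nat.factorial t : ℕ) : F)⁻¹) *
      ∏ j ∈ Finset.range t, (Polynomial.X - Polynomial.C ((j : ℕ) : F)) with hB
  have hBeval : ∀ t, t ≤ n → ∀ k : ℕ, (B t).eval ((k : ℕ) : F) = ((k.choose t : ℕ) : F) := by
    intro t ht k
    rw [hB]
    simp only [Polynomial.eval_mul, Polynomial.eval_C, Polynomial.eval_prod,
      Polynomial.eval_sub, Polynomial.eval_X]
    rw [aux_desc_eval, Nat.descFactorial_eq_factorial_mul_choose, Nat.cast_mul]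
    rw [inv_mul_cancel_left₀ (hfact t ht)]
  have hBdeg : ∀ t, (B t).natDegree ≤ t := by
    intro t
    rw [hB]
    refine le_trans (Polynomial.natDegree_mul_le) ?_
    rw [Polynomial.natDegree_C, zero_add]
    refine le_trans (Polynomial.natDegree_prod_le _ _) ?_
    calc ∑ j ∈ Finset.range t, (Polynomial.X - Polynomial.C ((j:ℕ):F)).natDegree
        ≤ ∑ _j ∈ Finset.range t, 1 := by
          apply Finset.sum_le_sum
          intro j _
          exact Polynomial.natDegree_X_sub_C_le _
      _ = t := by simp
  -- the interpolating polynomial P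
  set P : Polynomial F := ∑ m ∈ f.support,
      Polynomial.C (coeff m f * (((n.choose m.support.card : ℕ) : F))⁻¹) * B m.support.card
    with hP
  have hPdeg : P.natDegree ≤ n - d := by
    rw [hP]
    apply Polynomial.natDegree_sum_le_of_forall_le
    intro m hm
    refine le_trans Polynomial.natDegree_mul_le ?_
    rw [Polynomial.natDegree_C, zero_add]
    refine le_trans (hBdeg _) (le_trans (le_trans (hmono m hm).2 ?_) hcon)
    exact MvPolynomial.le_totalDegree hm
  have hsn : ∀ m : Fin n →₀ ℕ, m.support.card ≤ n := by
    intro m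
    simpa using Finset.card_le_card (Finset.subset_univ m.support)
  -- key evaluation of P at Boolean levels
  have hPeval : ∀ k : ℕ, k ≤ n → ∀ T : Finset (Fin n), T.card = k →
      P.eval ((k : ℕ) : F) = eval (fun i => if i ∈ T then (1:F) else 0) f := by
    intro k hk T hT
    apply mul_left_cancel₀ (hchoose2n k hk)
    have hL : ((n.choose k : ℕ) : F) * P.eval ((k : ℕ) : F)
        = ∑ m ∈ f.support, coeff m f *
            ((((Finset.univ.powersetCard k).filter (fun T' => m.support ⊆ T')).card : ℕ) : F) := by
      rw [hP, Polynomial.eval_finset_sum, Finset.mul_sum]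
      apply Finset.sum_congr rfl
      intro m _
      rw [Polynomial.eval_mul, Polynomial.eval_C, hBeval m.support.card (hsn m) k]
      rcases le_or_gt m.support.card k with hsk | hsk
      · rw [aux_count m.support k hsk]
        have hcast : ((n.choose k : ℕ) : F) * ((k.choose m.support.card : ℕ) : F)
            = ((n.choose m.support.card : ℕ) : F) *
              (((n - m.support.card).choose (k - m.support.card) : ℕ) : F) := by
          rw [← Nat.cast_mul, ← Nat.cast_mul, Nat.choose_mul hsk]
        calc ((n.choose k : ℕ) : F) *
              (coeff m f * (((n.choose m.support.card : ℕ) : F))⁻¹ *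
                ((k.choose m.support.card : ℕ) : F))
            = coeff m f * (((n.choose m.support.card : ℕ) : F))⁻¹ *
              (((n.choose k : ℕ) : F) * ((k.choose m.support.card : ℕ) : F)) := by ring
          _ = coeff m f * (((n.choose m.support.card : ℕ) : F))⁻¹ *
              (((n.choose m.support.card : ℕ) : F) *
                (((n - m.support.card).choose (k - m.support.card) : ℕ) : F)) := by rw [hcast]
          _ = coeff m f * (((n - m.support.card).choose (k - m.support.card) : ℕ) : F) := by
              rw [mul_assoc, inv_mul_cancel_left₀ (hchoose2n _ (hsn m))]
      · rw [Nat.choose_eq_zero_of_lt hsk]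
        have hempty : (Finset.univ.powersetCard k).filter (fun T' => m.support ⊆ T') = ∅ := by
          rw [Finset.filter_eq_empty_iff]
          intro T' hT'
          rw [Finset.mem_powersetCard] at hT'
          intro hsub
          have := Finset.card_le_card hsub
          omega
        rw [hempty]
        simp
    have hswap : ∑ T' ∈ Finset.univ.powersetCard k,
        eval (fun i => if i ∈ T' then (1:F) else 0) f
        = ∑ m ∈ f.support, coeff m f *
            ((((Finset.univ.powersetCard k).filter (fun T' => m.support ⊆ T')).card : ℕ) : F) := by
      rw [Finset.sum_congr rfl (fun T' _ => aux_eval_ind T' f), Finset.sum_comm]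
      apply Finset.sum_congr rfl
      intro m _
      rw [← Finset.mul_sum, Finset.sum_boole]
    have hR : ∑ T' ∈ Finset.univ.powersetCard k,
        eval (fun i => if i ∈ T' then (1:F) else 0) f
        = ((n.choose k : ℕ) : F) * eval (fun i => if i ∈ T then (1:F) else 0) f := by
      rw [Finset.sum_congr rfl
        (fun T' hT' => hlevel T' T (by rw [(Finset.mem_powersetCard.1 hT').2, hT]))]
      rw [Finset.sum_const, Finset.card_powersetCard, Finset.card_univ, Fintype.card_fin,
        nsmul_eq_mul]
    rw [hL, ← hswap, hR]
  -- the contradiction polynomial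
  set Q : Polynomial F := P * (B d - Polynomial.C β) - 1 with hQ
  have hQdeg : Q.natDegree ≤ n := by
    rw [hQ]
    have h1 : (1 : Polynomial F) = Polynomial.C 1 := (map_one Polynomial.C).symm
    rw [h1, Polynomial.natDegree_sub_C]
    refine le_trans Polynomial.natDegree_mul_le ?_
    have h2 : (B d - Polynomial.C β).natDegree = (B d).natDegree := Polynomial.natDegree_sub_C
    have h3 := hBdeg d
    omega
  have hQroot : ∀ k : ℕ, k ≤ n → Q.eval ((k : ℕ) : F) = 0 := by
    intro k hk
    obtain ⟨T, _, hTcard⟩ := Finset.exists_subset_card_eq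
      (show k ≤ (Finset.univ : Finset (Fin n)).card by simpa using hk)
    rw [hQ]
    simp only [Polynomial.eval_sub, Polynomial.eval_mul, Polynomial.eval_one, Polynomial.eval_C]
    rw [hPeval k hk T hTcard, hBeval d hdn k]
    have := hval T
    rw [hTcard] at this
    rw [this, sub_self]
  have hcard : ((Finset.range (n + 1)).image (fun k : ℕ => ((k : ℕ) : F))).card = n + 1 := by
    rw [Finset.card_image_of_injOn, Finset.card_range]
    intro a ha b hb hab
    exact hinj a b (Nat.lt_succ_iff.1 (Finset.mem_range.1 ha))
      (Nat.lt_succ_iff.1 (Finset.mem_range.1 hb)) hab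
  have hQ0 : Q = 0 := by
    refine Polynomial.eq_zero_of_natDegree_lt_card_of_eval_eq_zero' Q
      ((Finset.range (n + 1)).image (fun k : ℕ => ((k : ℕ) : F))) ?_ ?_
    · intro x hx
      obtain ⟨k, hk, rfl⟩ := Finset.mem_image.1 hx
      exact hQroot k (Nat.lt_succ_iff.1 (Finset.mem_range.1 hk))
    · rw [hcard]
      omega
  have hunit : P * (B d - Polynomial.C β) = 1 := by
    have h1 : P * (B d - Polynomial.C β) - 1 = 0 := by rw [← hQ, hQ0]
    exact sub_eq_zero.1 h1
  have hPne : P ≠ 0 := by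
    intro h
    rw [h, zero_mul] at hunit
    exact one_ne_zero hunit.symm
  have hBdval : (B d - Polynomial.C β).natDegree = d := by
    rw [Polynomial.natDegree_sub_C, hB]
    rw [Polynomial.natDegree_C_mul (inv_ne_zero (hfact d hdn))]
    rw [Polynomial.natDegree_prod]
    · calc ∑ j ∈ Finset.range d, (Polynomial.X - Polynomial.C ((j : ℕ) : F)).natDegree
          = ∑ _j ∈ Finset.range d, 1 :=
            Finset.sum_congr rfl fun j _ => Polynomial.natDegree_X_sub_C _
        _ = d := by simp
    · intro j _
      exact Polynomial.X_sub_C_ne_zero _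
  have hBCne : (B d - Polynomial.C β) ≠ 0 := by
    intro h
    rw [h, Polynomial.natDegree_zero] at hBdval
    omega
  have hfinal := Polynomial.natDegree_mul hPne hBCne
  rw [hunit, Polynomial.natDegree_one, hBdval] at hfinal
  omega
end

section
/- Let F be a field of characteristic 0 or at least 5, n ≥ 1, and β ∈ F with β ∉ {−1, 0, 1}. Let f ∈ F[x_1,…,x_{2n}, y_1,…,y_{2n}] be multilinear and agree with 1/Q on the Boolean cube, i.e., f(a,b)·Q(a,b) = 1 for all Boolean points (a,b). Then the coefficient in f of the monomial (∏_{i∈[2n], i odd} x_i)·(∏_{i∈[2n], i even} y_i) equals 1/β + 1/(1−β) = 1/(β(1−β)); in particular this coefficient is nonzero. -/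
open MvPolynomial

/-- The polynomial `Q̃ := ∏_{i=1}^{n} (x_{2i−1}·y_{2i} − y_{2i−1}·x_{2i})` in
`F[x_1,…,x_{2n}, y_1,…,y_{2n}]`, with the `x`-variables indexed by `Sum.inl` and the
`y`-variables by `Sum.inr` (0-based indexing). -/
noncomputable def Qtilde (F : Type*) [Field F] (n : ℕ) :
    MvPolynomial (Fin (2 * n) ⊕ Fin (2 * n)) F :=
  ∏ i : Fin n,
    (X (Sum.inl ⟨2 * i.1, by have := i.2; omega⟩) * X (Sum.inr ⟨2 * i.1 + 1, by have := i.2; omega⟩)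
      - X (Sum.inr ⟨2 * i.1, by have := i.2; omega⟩) * X (Sum.inl ⟨2 * i.1 + 1, by have := i.2; omega⟩))

/-- The exponent vector of the monomial `(∏_{i∈[2n] odd} x_i) · (∏_{i∈[2n] even} y_i)`
(1-based indexing; in 0-based indexing the `x`-indices are even and the `y`-indices odd). -/
noncomputable def oddEvenMonomial (n : ℕ) : (Fin (2 * n) ⊕ Fin (2 * n)) →₀ ℕ :=
  ∑ i : Fin n,
    (Finsupp.single (Sum.inl ⟨2 * i.1, by have := i.2; omega⟩) 1
      + Finsupp.single (Sum.inr ⟨2 * i.1 + 1, by have := i.2; omega⟩) 1)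

-- indicator point of a finset of variables
def ptS (F : Type*) [Field F] {V : Type*} [DecidableEq V] (S : Finset V) : V → F :=
  fun v => if v ∈ S then 1 else 0

lemma sum_pow_card_F {F : Type*} [Field F] {α : Type*} [DecidableEq α] {x : Finset α} :
    ∑ m ∈ x.powerset, (-1 : F) ^ m.card = if x = ∅ then 1 else 0 := by
  have h := congrArg (Int.cast : ℤ → F) (Finset.sum_powerset_neg_one_pow_card (x := x))
  push_cast at h
  convert h using 2

lemma sum_sdiff_reindex {F : Type*} [Field F] {α : Type*} [DecidableEq α]
    (M : Finset α) (g : Finset α → F) :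
    ∑ S ∈ M.powerset, g (M \ S) = ∑ T ∈ M.powerset, g T := by
  refine Finset.sum_nbij' (fun S => M \ S) (fun T => M \ T) ?_ ?_ ?_ ?_ ?_ <;>
    simp +contextual [Finset.mem_powerset, Finset.sdiff_sdiff_eq_self]

lemma sum_pow_sdiff {F : Type*} [Field F] {α : Type*} [DecidableEq α] (M : Finset α) :
    ∑ S ∈ M.powerset, (-1 : F) ^ (M \ S).card = if M = ∅ then 1 else 0 := by
  exact (sum_sdiff_reindex M (fun T => (-1 : F) ^ T.card)).trans
    sum_pow_card_F

lemma sum_ite_subset {F : Type*} [Field F] {α : Type*} [DecidableEq α] (M A : Finset α) :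
    ∑ S ∈ M.powerset, (if A ⊆ S then ((-1 : F) ^ (M \ S).card) else 0)
      = if A = M then 1 else 0 := by
  by_cases hAM : A ⊆ M
  · have key : ∀ S ∈ M.powerset,
        (if A ⊆ S then ((-1 : F) ^ (M \ S).card) else 0)
          = (fun T => if Disjoint A T then (-1 : F) ^ T.card else 0) (M \ S) := by
      intro S hS
      rw [Finset.mem_powerset] at hS
      have : A ⊆ S ↔ Disjoint A (M \ S) := by
        constructor
        · intro h
          rw [Finset.disjoint_left]
          intro a ha
          simp only [Finset.mem_sdiff]
          exact fun ⟨_, hn⟩ => hn (h ha)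
        · intro h a ha
          by_contra hna
          exact (Finset.disjoint_left.mp h ha) (Finset.mem_sdiff.mpr ⟨hAM ha, hna⟩)
      simp only [this]
    refine (Finset.sum_congr rfl key).trans
      ((sum_sdiff_reindex M (fun T => if Disjoint A T then (-1 : F) ^ T.card else 0)).trans ?_)
    rw [← Finset.sum_filter]
    have hfil : M.powerset.filter (fun T => Disjoint A T) = (M \ A).powerset := by
      ext T
      simp [Finset.mem_powerset, Finset.subset_sdiff, disjoint_comm, and_comm]
    rw [hfil, sum_pow_card_F]
    by_cases h : A = M
    · rw [if_pos (Finset.sdiff_eq_empty_iff_subset.mpr (le_of_eq h.symm)), if_pos h]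
    · rw [if_neg (fun hh => h (le_antisymm hAM (Finset.sdiff_eq_empty_iff_subset.mp hh))),
        if_neg h]
  · rw [Finset.sum_eq_zero, if_neg (fun h => hAM (le_of_eq h))]
    intro S hS
    rw [Finset.mem_powerset] at hS
    exact if_neg (fun h => hAM (h.trans hS))

lemma prod_ptS_pow {F : Type*} [Field F] {V : Type*} [DecidableEq V]
    (S : Finset V) (m : V →₀ ℕ) :
    (∏ i ∈ m.support, ptS F S i ^ m i) = if m.support ⊆ S then 1 else 0 := by
  by_cases h : m.support ⊆ S
  · rw [if_pos h]
    exact Finset.prod_eq_one fun i hi => by rw [ptS, if_pos (h hi), one_pow]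
  · rw [if_neg h]
    obtain ⟨i, hi, hiS⟩ := Finset.not_subset.mp h
    refine Finset.prod_eq_zero hi ?_
    rw [ptS, if_neg hiS, zero_pow (Finsupp.mem_support_iff.mp hi)]

lemma sum_eval_pt {F : Type*} [Field F] {V : Type*} [DecidableEq V]
    (M : Finset V) (f : MvPolynomial V F) :
    ∑ S ∈ M.powerset, (-1 : F) ^ (M \ S).card * eval (ptS F S) f
      = ∑ m ∈ f.support.filter (fun m => m.support = M), coeff m f := by
  have h1 : ∀ S : Finset V, eval (ptS F S) f
      = ∑ m ∈ f.support, coeff m f * (if m.support ⊆ S then 1 else 0) := by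
    intro S
    rw [eval_eq]
    exact Finset.sum_congr rfl fun m _ => by rw [prod_ptS_pow]
  simp_rw [h1, Finset.mul_sum]
  rw [Finset.sum_comm, Finset.sum_filter]
  refine Finset.sum_congr rfl fun m _ => ?_
  have h2 : ∀ S : Finset V,
      (-1 : F) ^ (M \ S).card * (coeff m f * (if m.support ⊆ S then 1 else 0))
        = coeff m f * (if m.support ⊆ S then ((-1 : F) ^ (M \ S).card) else 0) := by
    intro S; split <;> ring
  rw [Finset.sum_congr rfl fun S _ => h2 S, ← Finset.mul_sum, sum_ite_subset]
  split <;> ring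

lemma m0_inl (n : ℕ) (j : Fin (2 * n)) :
    oddEvenMonomial n (Sum.inl j) = if j.1 % 2 = 0 then 1 else 0 := by
  have h : oddEvenMonomial n (Sum.inl j)
      = ∑ i : Fin n, (if 2 * i.1 = j.1 then 1 else 0) := by
    rw [oddEvenMonomial, Finset.sum_apply']
    refine Finset.sum_congr rfl fun i _ => ?_
    rw [Finsupp.add_apply, Finsupp.single_apply, Finsupp.single_apply]
    simp [Fin.ext_iff]
  rw [h]
  by_cases hj : j.1 % 2 = 0
  · rw [if_pos hj]
    have hlt : j.1 / 2 < n := by have := j.2; omega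
    rw [Finset.sum_eq_single (⟨j.1 / 2, hlt⟩ : Fin n)]
    · rw [if_pos (by simp; omega)]
    · intro i _ hne
      rw [if_neg]
      intro hc
      exact hne (Fin.ext (by simp; omega))
    · simp
  · rw [if_neg hj, Finset.sum_eq_zero]
    intro i _
    rw [if_neg (by omega)]

lemma m0_inr (n : ℕ) (j : Fin (2 * n)) :
    oddEvenMonomial n (Sum.inr j) = if j.1 % 2 = 1 then 1 else 0 := by
  have h : oddEvenMonomial n (Sum.inr j)
      = ∑ i : Fin n, (if 2 * i.1 + 1 = j.1 then 1 else 0) := by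
    rw [oddEvenMonomial, Finset.sum_apply']
    refine Finset.sum_congr rfl fun i _ => ?_
    rw [Finsupp.add_apply, Finsupp.single_apply, Finsupp.single_apply]
    simp [Fin.ext_iff]
  rw [h]
  by_cases hj : j.1 % 2 = 1
  · rw [if_pos hj]
    have hlt : j.1 / 2 < n := by have := j.2; omega
    rw [Finset.sum_eq_single (⟨j.1 / 2, hlt⟩ : Fin n)]
    · rw [if_pos (by simp; omega)]
    · intro i _ hne
      rw [if_neg]
      intro hc
      exact hne (Fin.ext (by simp; omega))
    · simp
  · rw [if_neg hj, Finset.sum_eq_zero]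
    intro i _
    rw [if_neg (by omega)]

lemma m0_le_one (n : ℕ) (v : Fin (2 * n) ⊕ Fin (2 * n)) : oddEvenMonomial n v ≤ 1 := by
  rcases v with j | j
  · rw [m0_inl]; split <;> omega
  · rw [m0_inr]; split <;> omega

lemma mem_M_inl {n : ℕ} (j : Fin (2 * n)) :
    Sum.inl j ∈ (oddEvenMonomial n).support ↔ j.1 % 2 = 0 := by
  rw [Finsupp.mem_support_iff, m0_inl]
  split <;> simp_all

lemma mem_M_inr {n : ℕ} (j : Fin (2 * n)) :
    Sum.inr j ∈ (oddEvenMonomial n).support ↔ j.1 % 2 = 1 := by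
  rw [Finsupp.mem_support_iff, m0_inr]
  split <;> simp_all

lemma eval_Qtilde_pt {F : Type*} [Field F] {n : ℕ} (S : Finset (Fin (2 * n) ⊕ Fin (2 * n)))
    (hS : S ⊆ (oddEvenMonomial n).support) :
    eval (ptS F S) (Qtilde F n) = if S = (oddEvenMonomial n).support then 1 else 0 := by
  rw [Qtilde, map_prod]
  simp only [map_sub, map_mul, eval_X]
  by_cases hSM : S = (oddEvenMonomial n).support
  · rw [if_pos hSM]
    subst hSM
    refine Finset.prod_eq_one fun i _ => ?_
    have h1 : ∀ j : Fin (2 * n), j.1 % 2 = 0 →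
        ptS F (oddEvenMonomial n).support (Sum.inl j) = 1 :=
      fun j hj => if_pos ((mem_M_inl j).mpr hj)
    have h2 : ∀ j : Fin (2 * n), j.1 % 2 = 1 →
        ptS F (oddEvenMonomial n).support (Sum.inr j) = 1 :=
      fun j hj => if_pos ((mem_M_inr j).mpr hj)
    have h3 : ∀ j : Fin (2 * n), j.1 % 2 = 0 →
        ptS F (oddEvenMonomial n).support (Sum.inr j) = 0 :=
      fun j hj => if_neg (fun h => by have := (mem_M_inr j).mp h; omega)
    have h4 : ∀ j : Fin (2 * n), j.1 % 2 = 1 →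
        ptS F (oddEvenMonomial n).support (Sum.inl j) = 0 :=
      fun j hj => if_neg (fun h => by have := (mem_M_inl j).mp h; omega)
    rw [h1 _ (by show 2 * i.1 % 2 = 0; omega), h2 _ (by show (2 * i.1 + 1) % 2 = 1; omega),
      h3 _ (by show 2 * i.1 % 2 = 0; omega), h4 _ (by show (2 * i.1 + 1) % 2 = 1; omega)]
    ring
  · rw [if_neg hSM]
    have hss : S ⊂ (oddEvenMonomial n).support := Finset.ssubset_iff_subset_ne.mpr ⟨hS, hSM⟩
    obtain ⟨v, hvM, hvS⟩ := Finset.exists_of_ssubset hss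
    have hcv : ∀ j : Fin (2 * n), j.1 % 2 = 0 → ptS F S (Sum.inr j) = 0 :=
      fun j hj => if_neg (fun h => by have := (mem_M_inr j).mp (hS h); omega)
    have hdv : ∀ j : Fin (2 * n), j.1 % 2 = 1 → ptS F S (Sum.inl j) = 0 :=
      fun j hj => if_neg (fun h => by have := (mem_M_inl j).mp (hS h); omega)
    rcases v with j | j
    · have hj : j.1 % 2 = 0 := (mem_M_inl j).mp hvM
      have hlt : j.1 / 2 < n := by have := j.2; omega
      refine Finset.prod_eq_zero (Finset.mem_univ (⟨j.1 / 2, hlt⟩ : Fin n)) ?_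
      have hvj : (⟨2 * (⟨j.1 / 2, hlt⟩ : Fin n).1, by have := j.2; simp; omega⟩ : Fin (2 * n)) = j := by
        apply Fin.ext; simp; omega
      rw [hvj]
      rw [show ptS F S (Sum.inl j) = 0 from if_neg hvS,
        hcv j hj]
      ring
    · have hj : j.1 % 2 = 1 := (mem_M_inr j).mp hvM
      have hlt : j.1 / 2 < n := by have := j.2; omega
      refine Finset.prod_eq_zero (Finset.mem_univ (⟨j.1 / 2, hlt⟩ : Fin n)) ?_
      have hvj : (⟨2 * (⟨j.1 / 2, hlt⟩ : Fin n).1 + 1, by have := j.2; simp; omega⟩ : Fin (2 * n)) = j := by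
        apply Fin.ext; simp; omega
      rw [hvj]
      rw [show ptS F S (Sum.inr j) = 0 from if_neg hvS,
        hdv j hj]
      ring

/-- Let `F` have characteristic `0` or at least `5`, `n ≥ 1`, and
`β ∉ {−1,0,1}`. If `f` is multilinear and agrees with `1/Q` on the Boolean cube
(`Q = Q̃ − β`), then the coefficient in `f` of `(∏_{i odd} x_i)·(∏_{i even} y_i)` equals
`1/β + 1/(1−β) = 1/(β(1−β))`; in particular it is nonzero. -/
theorem coeff_oddEven_monomial_of_inverse_of_Q
    (F : Type*) [Field F] (n : ℕ) (hn : 1 ≤ n)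
    (hchar : ringChar F = 0 ∨ 5 ≤ ringChar F)
    (β : F) (hβ : β ∉ ({-1, 0, 1} : Set F))
    (f : MvPolynomial (Fin (2 * n) ⊕ Fin (2 * n)) F)
    (hml : ∀ v, f.degreeOf v ≤ 1)
    (hf : ∀ a b : Fin (2 * n) → F, (∀ i, a i = 0 ∨ a i = 1) → (∀ i, b i = 0 ∨ b i = 1) →
      eval (Sum.elim a b) f * eval (Sum.elim a b) (Qtilde F n - C β) = 1) :
    coeff (oddEvenMonomial n) f = β⁻¹ + (1 - β)⁻¹ ∧
    coeff (oddEvenMonomial n) f = (β * (1 - β))⁻¹ ∧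
    coeff (oddEvenMonomial n) f ≠ 0 := by
  simp only [Set.mem_insert_iff, Set.mem_singleton_iff, not_or] at hβ
  obtain ⟨hβm1, hβ0, hβ1⟩ := hβ
  have h1β : (1 : F) - β ≠ 0 := sub_ne_zero.mpr (fun h => hβ1 h.symm)
  set M : Finset (Fin (2 * n) ⊕ Fin (2 * n)) := (oddEvenMonomial n).support with hM
  -- M is nonempty
  have hMne : M ≠ ∅ := by
    have h0 : Sum.inl (⟨0, by omega⟩ : Fin (2 * n)) ∈ M :=
      (mem_M_inl _).mpr (by show 0 % 2 = 0; rfl)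
    intro h
    rw [h] at h0
    simp at h0
  -- the alternating sum over the powerset of M equals the coefficient
  have key := sum_eval_pt M f
  have hsub : f.support.filter (fun m => m.support = M) ⊆ {oddEvenMonomial n} := by
    intro m hm
    rw [Finset.mem_filter] at hm
    rw [Finset.mem_singleton]
    ext v
    have h1 : m v ≤ 1 := by
      have hlt := (degreeOf_lt_iff (by norm_num : (0:ℕ) < 2)).mp
        (lt_of_le_of_lt (hml v) one_lt_two) m hm.1
      omega
    have h2 := m0_le_one n v
    by_cases hv : v ∈ M
    · have hm0 : oddEvenMonomial n v ≠ 0 := Finsupp.mem_support_iff.mp hv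
      have hmv : m v ≠ 0 := Finsupp.mem_support_iff.mp (hm.2 ▸ hv)
      omega
    · have hm0 : oddEvenMonomial n v = 0 := Finsupp.notMem_support_iff.mp hv
      have hmv : m v = 0 := Finsupp.notMem_support_iff.mp (fun h => hv (hm.2 ▸ h))
      omega
  have hcoeff : (∑ m ∈ f.support.filter (fun m => m.support = M), coeff m f)
      = coeff (oddEvenMonomial n) f := by
    rcases Finset.subset_singleton_iff.mp hsub with h | h
    · rw [h, Finset.sum_empty]
      have hnot : oddEvenMonomial n ∉ f.support := by
        intro hmem
        have : oddEvenMonomial n ∈ f.support.filter (fun m => m.support = M) :=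
          Finset.mem_filter.mpr ⟨hmem, rfl⟩
        rw [h] at this
        simp at this
      exact (MvPolynomial.notMem_support_iff.mp hnot).symm
    · rw [h, Finset.sum_singleton]
  -- evaluate f on the points of the cube below M
  have hev : ∀ S ∈ M.powerset, eval (ptS F S) f = ((if S = M then 1 else 0) - β)⁻¹ := by
    intro S hSp
    rw [Finset.mem_powerset] at hSp
    have hab : Sum.elim (fun i => ptS F S (Sum.inl i)) (fun i => ptS F S (Sum.inr i))
        = ptS F S := by
      funext v; rcases v with j | j <;> rfl
    have h01a : ∀ i, ptS F S (Sum.inl i) = 0 ∨ ptS F S (Sum.inl i) = 1 := by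
      intro i; by_cases h : Sum.inl i ∈ S <;> simp [ptS, h]
    have h01b : ∀ i, ptS F S (Sum.inr i) = 0 ∨ ptS F S (Sum.inr i) = 1 := by
      intro i; by_cases h : Sum.inr i ∈ S <;> simp [ptS, h]
    have hQ := hf _ _ h01a h01b
    rw [hab, map_sub, eval_C, eval_Qtilde_pt S hSp] at hQ
    exact eq_inv_of_mul_eq_one_left hQ
  have hsum : coeff (oddEvenMonomial n) f
      = ∑ S ∈ M.powerset, (-1 : F) ^ (M \ S).card * ((if S = M then 1 else 0) - β)⁻¹ := by
    rw [← hcoeff, ← key]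
    exact Finset.sum_congr rfl fun S hSp => by rw [hev S hSp]
  have hsplit : ∀ S : Finset (Fin (2 * n) ⊕ Fin (2 * n)),
      ((if S = M then (1 : F) else 0) - β)⁻¹
        = (-β)⁻¹ + (if S = M then (1 - β)⁻¹ - (-β)⁻¹ else 0) := by
    intro S
    split
    · ring
    · rw [zero_sub, add_zero]
  have hval : coeff (oddEvenMonomial n) f = β⁻¹ + (1 - β)⁻¹ := by
    rw [hsum]
    simp_rw [hsplit, mul_add, Finset.sum_add_distrib, ← Finset.sum_mul, sum_pow_sdiff,
      if_neg hMne, zero_mul, mul_ite, mul_zero]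
    rw [Finset.sum_ite_eq' M.powerset M, if_pos (Finset.mem_powerset.mpr (le_refl M)),
      Finset.sdiff_self, Finset.card_empty, pow_zero, one_mul, zero_add, inv_neg]
    ring
  refine ⟨hval, ?_, ?_⟩
  · rw [hval]
    field_simp
    ring
  · rw [hval]
    have : β⁻¹ + (1 - β)⁻¹ = (β * (1 - β))⁻¹ := by field_simp; ring
    rw [this]
    exact inv_ne_zero (mul_ne_zero hβ0 h1β)
end

section
/- Let F be a field of characteristic 0 or at least 5, n ≥ 1, and β ∈ F with β ∉ {−1, 0, 1}. Then any polynomial f ∈ F[x_1,…,x_{2n}, y_1,…,y_{2n}] that agrees with 1/Q on the Boolean cube (i.e., f(a,b)·Q(a,b) = 1 for all Boolean points (a,b)) has total degree at least 2n. -/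
open MvPolynomial

namespace DegLB

open Finset

variable (F : Type*) [Field F]

/-- Boolean value as a field element. -/
def bv (b : Bool) : F := if b then 1 else 0

/-- Sign `(-1)^b`. -/
def sg (b : Bool) : F := if b then -1 else 1

lemma bv_mem (b : Bool) : bv F b = 0 ∨ bv F b = 1 := by cases b <;> simp [bv]

variable {n : ℕ}

/-- The Boolean point determined by `s : Fin n → Bool × Bool`. -/
def pt (s : Fin n → Bool × Bool) : Fin (2 * n) → F := fun j =>
  if j.1 % 2 = 0 then bv F (s ⟨j.1 / 2, by have := j.2; omega⟩).1
  else bv F (s ⟨j.1 / 2, by have := j.2; omega⟩).2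

lemma pt_even (s : Fin n → Bool × Bool) (i : Fin n) (h : 2 * i.1 < 2 * n) :
    pt F s ⟨2 * i.1, h⟩ = bv F (s i).1 := by
  have h2 : (2 * i.1) % 2 = 0 := by omega
  have h3 : (⟨2 * i.1 / 2, by omega⟩ : Fin n) = i := Fin.ext (show 2 * i.1 / 2 = i.1 by omega)
  simp only [pt, h2, if_true, h3]

lemma pt_odd (s : Fin n → Bool × Bool) (i : Fin n) (h : 2 * i.1 + 1 < 2 * n) :
    pt F s ⟨2 * i.1 + 1, h⟩ = bv F (s i).2 := by
  have h2 : ¬ ((2 * i.1 + 1) % 2 = 0) := by omega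
  have h3 : (⟨(2 * i.1 + 1) / 2, by omega⟩ : Fin n) = i :=
    Fin.ext (show (2 * i.1 + 1) / 2 = i.1 by omega)
  simp only [pt, h2, if_false, h3]

lemma pt_bool (s : Fin n → Bool × Bool) (j : Fin (2 * n)) :
    pt F s j = 0 ∨ pt F s j = 1 := by
  unfold pt; split <;> apply bv_mem

lemma prod_range_split {M : Type*} [CommMonoid M] (n : ℕ) (H : ℕ → M) :
    ∏ j ∈ Finset.range (2 * n), H j = ∏ i ∈ Finset.range n, (H (2 * i) * H (2 * i + 1)) := by
  induction n with
  | zero => simp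
  | succ k ih =>
    have h2 : 2 * (k + 1) = (2 * k) + 1 + 1 := by ring
    rw [h2, prod_range_succ, prod_range_succ, ih, prod_range_succ, mul_assoc]

lemma prod_fin_split {M : Type*} [CommMonoid M] (n : ℕ) (h : Fin (2 * n) → M) :
    ∏ j, h j = ∏ i : Fin n,
      (h ⟨2 * i.1, by have := i.2; omega⟩ * h ⟨2 * i.1 + 1, by have := i.2; omega⟩) := by
  classical
  let H : ℕ → M := fun j => if hj : j < 2 * n then h ⟨j, hj⟩ else 1
  have h1 : ∏ j, h j = ∏ j ∈ Finset.range (2 * n), H j := by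
    rw [← Fin.prod_univ_eq_prod_range]
    exact Finset.prod_congr rfl fun j _ => by simp [H, j.2]
  have h2 : ∏ i : Fin n,
      (h ⟨2 * i.1, by have := i.2; omega⟩ * h ⟨2 * i.1 + 1, by have := i.2; omega⟩)
      = ∏ i ∈ Finset.range n, (H (2 * i) * H (2 * i + 1)) := by
    rw [← Fin.prod_univ_eq_prod_range (fun i => H (2 * i) * H (2 * i + 1))]
    refine Finset.prod_congr rfl fun i _ => ?_
    have hi1 : 2 * i.1 < 2 * n := by have := i.2; omega
    have hi2 : 2 * i.1 + 1 < 2 * n := by have := i.2; omega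
    simp [H, hi1, hi2]
  rw [h1, h2, prod_range_split]

/-- The alternating-sum functional on the Boolean cube (with all `y`-variables set to `1`). -/
noncomputable def L (g : MvPolynomial (Fin (2 * n) ⊕ Fin (2 * n)) F) : F :=
  ∑ s : Fin n → Bool × Bool,
    (∏ i, sg F (s i).1 * sg F (s i).2) * eval (Sum.elim (pt F s) fun _ => 1) g

/-- `∑_{b ∈ {0,1}} (-1)^b b^e`. -/
def ee (e : ℕ) : F := if e = 0 then 0 else -1

lemma sum_sg_bv_pow (e : ℕ) : ∑ b : Bool, sg F b * (bv F b) ^ e = ee F e := by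
  rw [Fintype.sum_bool]
  rcases e with _ | e
  · simp [sg, bv, ee]
  · simp [sg, bv, ee]

lemma L_additive {ι : Type*} (t : Finset ι)
    (g : ι → MvPolynomial (Fin (2 * n) ⊕ Fin (2 * n)) F) :
    L F (∑ d ∈ t, g d) = ∑ d ∈ t, L F (g d) := by
  unfold L
  simp only [map_sum, Finset.mul_sum]
  exact Finset.sum_comm

lemma L_monomial (d : (Fin (2 * n) ⊕ Fin (2 * n)) →₀ ℕ) (c : F) :
    L F (monomial d c) = c * ∏ i : Fin n,
      (ee F (d (Sum.inl ⟨2 * i.1, by have := i.2; omega⟩)) *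
       ee F (d (Sum.inl ⟨2 * i.1 + 1, by have := i.2; omega⟩))) := by
  classical
  have hev : ∀ s : Fin n → Bool × Bool,
      eval (Sum.elim (pt F s) fun _ => 1) (monomial d c)
        = c * ∏ j : Fin (2 * n), (pt F s j) ^ d (Sum.inl j) := by
    intro s
    rw [eval_monomial, Finsupp.prod_pow, Fintype.prod_sum_type]
    simp
  unfold L
  simp only [hev]
  have hgrp : ∀ s : Fin n → Bool × Bool,
      (∏ i, sg F (s i).1 * sg F (s i).2) *
        (c * ∏ j : Fin (2 * n), (pt F s j) ^ d (Sum.inl j))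
      = c * ∏ i : Fin n,
          ((sg F (s i).1 * (bv F (s i).1) ^ d (Sum.inl ⟨2 * i.1, by have := i.2; omega⟩)) *
           (sg F (s i).2 * (bv F (s i).2) ^ d (Sum.inl ⟨2 * i.1 + 1, by have := i.2; omega⟩))) := by
    intro s
    rw [prod_fin_split n (fun j => (pt F s j) ^ d (Sum.inl j))]
    rw [mul_left_comm, ← Finset.prod_mul_distrib]
    congr 1
    refine Finset.prod_congr rfl fun i _ => ?_
    rw [pt_even F s i, pt_odd F s i]
    ring
  simp only [hgrp]
  rw [← Finset.mul_sum]
  congr 1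
  have hswap := Fintype.prod_sum (fun (i : Fin n) (p : Bool × Bool) =>
      (sg F p.1 * (bv F p.1) ^ d (Sum.inl ⟨2 * i.1, by have := i.2; omega⟩)) *
      (sg F p.2 * (bv F p.2) ^ d (Sum.inl ⟨2 * i.1 + 1, by have := i.2; omega⟩)))
  rw [← hswap]
  refine Finset.prod_congr rfl fun i _ => ?_
  rw [Fintype.sum_prod_type, ← sum_sg_bv_pow F (d (Sum.inl ⟨2 * i.1, by have := i.2; omega⟩)),
    ← sum_sg_bv_pow F (d (Sum.inl ⟨2 * i.1 + 1, by have := i.2; omega⟩)), Finset.sum_mul_sum]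

lemma L_monomial_eq_zero (d : (Fin (2 * n) ⊕ Fin (2 * n)) →₀ ℕ) (c : F)
    (hd : (d.sum fun _ e => e) < 2 * n) : L F (monomial d c) = 0 := by
  classical
  have hsum : (d.sum fun _ e => e) = ∑ v, d v := Finsupp.sum_fintype _ _ fun _ => rfl
  have hsplit := Fintype.sum_sum_type fun v : Fin (2 * n) ⊕ Fin (2 * n) => d v
  rw [hsum, hsplit] at hd
  have hx : ∑ j : Fin (2 * n), d (Sum.inl j) < 2 * n := by omega
  have hj : ∃ j : Fin (2 * n), d (Sum.inl j) = 0 := by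
    by_contra hc
    push_neg at hc
    have hge : 2 * n * 1 ≤ ∑ j : Fin (2 * n), d (Sum.inl j) := by
      calc 2 * n * 1 = ∑ _j : Fin (2 * n), 1 := by simp
        _ ≤ _ := Finset.sum_le_sum fun j _ => Nat.one_le_iff_ne_zero.mpr (hc j)
    omega
  obtain ⟨j, hj⟩ := hj
  rw [L_monomial]
  apply mul_eq_zero_of_right
  have hjn : j.1 / 2 < n := by have := j.2; omega
  apply Finset.prod_eq_zero (Finset.mem_univ (⟨j.1 / 2, hjn⟩ : Fin n))
  rcases Nat.mod_two_eq_zero_or_one j.1 with hm | hm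
  · have hj' : (⟨2 * (⟨j.1 / 2, hjn⟩ : Fin n).1, by omega⟩ : Fin (2 * n)) = j :=
      Fin.ext (show 2 * (j.1 / 2) = j.1 by omega)
    rw [hj', hj]
    simp [ee]
  · have hj' : (⟨2 * (⟨j.1 / 2, hjn⟩ : Fin n).1 + 1, by omega⟩ : Fin (2 * n)) = j :=
      Fin.ext (show 2 * (j.1 / 2) + 1 = j.1 by omega)
    rw [hj', hj]
    simp [ee]

lemma eval_Qtilde (s : Fin n → Bool × Bool) :
    eval (Sum.elim (pt F s) fun _ => 1) (Qtilde F n)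
      = ∏ i : Fin n, (bv F (s i).1 - bv F (s i).2) := by
  unfold Qtilde
  rw [map_prod]
  refine Finset.prod_congr rfl fun i _ => ?_
  simp only [map_sub, map_mul, eval_X, Sum.elim_inl, Sum.elim_inr]
  rw [pt_even F s i, pt_odd F s i]
  ring

lemma q_mem (s : Fin n → Bool × Bool) :
    (∏ i : Fin n, (bv F (s i).1 - bv F (s i).2)) = -1 ∨
    (∏ i : Fin n, (bv F (s i).1 - bv F (s i).2)) = 0 ∨
    (∏ i : Fin n, (bv F (s i).1 - bv F (s i).2)) = 1 := by
  refine Finset.prod_induction _ (fun x => x = -1 ∨ x = 0 ∨ x = 1) ?_ (by norm_num) ?_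
  · rintro x y (rfl | rfl | rfl) (rfl | rfl | rfl) <;> norm_num
  · intro i _
    rcases bv_mem F (s i).1 with h1 | h1 <;> rcases bv_mem F (s i).2 with h2 | h2 <;>
      rw [h1, h2] <;> norm_num

lemma sum_S0 : ∑ p : Bool × Bool, sg F p.1 * sg F p.2 = 0 := by
  rw [Fintype.sum_prod_type]
  simp [Fintype.sum_bool, sg]

lemma sum_S1 : ∑ p : Bool × Bool, sg F p.1 * sg F p.2 * (bv F p.1 - bv F p.2) = 0 := by
  rw [Fintype.sum_prod_type]
  simp only [Fintype.sum_bool, sg, bv]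
  norm_num

lemma sum_S2 : ∑ p : Bool × Bool, sg F p.1 * sg F p.2 * (bv F p.1 - bv F p.2) ^ 2 = -2 := by
  rw [Fintype.sum_prod_type]
  simp only [Fintype.sum_bool, sg, bv]
  norm_num

lemma sum_prod_pow (G : Bool × Bool → F) :
    ∑ s : Fin n → Bool × Bool, ∏ i, G (s i) = (∑ p : Bool × Bool, G p) ^ n := by
  classical
  rw [← Fintype.prod_sum (fun (_ : Fin n) (p : Bool × Bool) => G p)]
  simp [Finset.prod_const]

lemma L_value (hn : 1 ≤ n) (β : F) (hβ0 : β ≠ 0) (hβ1 : β ≠ 1) (hβm : β ≠ -1)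
    (f : MvPolynomial (Fin (2 * n) ⊕ Fin (2 * n)) F)
    (hf : ∀ s : Fin n → Bool × Bool,
      eval (Sum.elim (pt F s) fun _ => 1) f
        = ((∏ i : Fin n, (bv F (s i).1 - bv F (s i).2)) - β)⁻¹) :
    L F f = (β * (1 - β ^ 2))⁻¹ * (-2) ^ n := by
  classical
  have h1 : (1 : F) - β ≠ 0 := sub_ne_zero.mpr (Ne.symm hβ1)
  have h2 : (1 : F) + β ≠ 0 := fun h => hβm (by linear_combination h)
  have h3 : (1 : F) - β ^ 2 ≠ 0 := by
    have he : (1 : F) - β ^ 2 = (1 - β) * (1 + β) := by ring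
    rw [he]; exact mul_ne_zero h1 h2
  have hinterp : ∀ t : F, (t = -1 ∨ t = 0 ∨ t = 1) →
      (t - β)⁻¹ = -β⁻¹ + (1 - β ^ 2)⁻¹ * t + (β * (1 - β ^ 2))⁻¹ * t ^ 2 := by
    intro t ht
    have h4 : (-1 : F) - β ≠ 0 := fun h => hβm (by linear_combination -h)
    have h5 : (1 : F) - β ≠ 0 := h1
    rcases ht with rfl | rfl | rfl
    · field_simp
      ring
    · field_simp
      ring
    · field_simp
      ring
  unfold L
  have hstep : ∀ s : Fin n → Bool × Bool,
      (∏ i, sg F (s i).1 * sg F (s i).2) * eval (Sum.elim (pt F s) fun _ => 1) f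
      = -β⁻¹ * ∏ i, (sg F (s i).1 * sg F (s i).2)
        + (1 - β ^ 2)⁻¹ * ∏ i, (sg F (s i).1 * sg F (s i).2 * (bv F (s i).1 - bv F (s i).2))
        + (β * (1 - β ^ 2))⁻¹ *
            ∏ i, (sg F (s i).1 * sg F (s i).2 * (bv F (s i).1 - bv F (s i).2) ^ 2) := by
    intro s
    rw [hf s, hinterp _ (q_mem F s)]
    have e1 : ∏ i, (sg F (s i).1 * sg F (s i).2 * (bv F (s i).1 - bv F (s i).2))
        = (∏ i, sg F (s i).1 * sg F (s i).2) * ∏ i, (bv F (s i).1 - bv F (s i).2) :=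
      Finset.prod_mul_distrib
    have e2 : ∏ i, (sg F (s i).1 * sg F (s i).2 * (bv F (s i).1 - bv F (s i).2) ^ 2)
        = (∏ i, sg F (s i).1 * sg F (s i).2) * (∏ i, (bv F (s i).1 - bv F (s i).2)) ^ 2 := by
      rw [Finset.prod_mul_distrib, Finset.prod_pow]
    rw [e1, e2]
    ring
  simp only [hstep]
  rw [Finset.sum_add_distrib, Finset.sum_add_distrib, ← Finset.mul_sum, ← Finset.mul_sum,
    ← Finset.mul_sum]
  rw [sum_prod_pow F (fun p => sg F p.1 * sg F p.2),
    sum_prod_pow F (fun p => sg F p.1 * sg F p.2 * (bv F p.1 - bv F p.2)),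
    sum_prod_pow F (fun p => sg F p.1 * sg F p.2 * (bv F p.1 - bv F p.2) ^ 2),
    sum_S0, sum_S1, sum_S2]
  rw [zero_pow (by omega : n ≠ 0)]
  ring


end DegLB

/-- Nullstellensatz degree lower bound for the vector invariant instance.
Let `F` have characteristic `0` or at least `5`, `n ≥ 1`, and `β ∉ {−1,0,1}`. Then any
polynomial `f` that agrees with `1/Q` on the Boolean cube (`Q = Q̃ − β`) has total degree at
least `2n`. -/
theorem degree_lower_bound_inverse_of_Q
    (F : Type*) [Field F] (n : ℕ) (hn : 1 ≤ n)
    (hchar : ringChar F = 0 ∨ 5 ≤ ringChar F)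
    (β : F) (hβ : β ∉ ({-1, 0, 1} : Set F))
    (f : MvPolynomial (Fin (2 * n) ⊕ Fin (2 * n)) F)
    (hf : ∀ a b : Fin (2 * n) → F, (∀ i, a i = 0 ∨ a i = 1) → (∀ i, b i = 0 ∨ b i = 1) →
      eval (Sum.elim a b) f * eval (Sum.elim a b) (Qtilde F n - C β) = 1) :
    2 * n ≤ f.totalDegree := by
  classical
  simp only [Set.mem_insert_iff, Set.mem_singleton_iff, not_or] at hβ
  obtain ⟨hβm, hβ0, hβ1⟩ := hβ
  by_contra hlt
  push_neg at hlt
  have h2ne : (2 : F) ≠ 0 := by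
    intro h
    have hdvd : ringChar F ∣ 2 := by
      have h' : ((2 : ℕ) : F) = 0 := by exact_mod_cast h
      exact (CharP.cast_eq_zero_iff F (ringChar F) 2).mp h'
    rcases hchar with h0 | h5
    · rw [h0] at hdvd
      simp at hdvd
    · have := Nat.le_of_dvd (by norm_num) hdvd
      omega
  have hfq : ∀ s : Fin n → Bool × Bool,
      eval (Sum.elim (DegLB.pt F s) fun _ => 1) f
        = ((∏ i : Fin n, (DegLB.bv F (s i).1 - DegLB.bv F (s i).2)) - β)⁻¹ := by
    intro s
    have hb := hf (DegLB.pt F s) (fun _ => 1) (DegLB.pt_bool F s) (fun _ => Or.inr rfl)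
    rw [map_sub, eval_C, DegLB.eval_Qtilde] at hb
    exact eq_inv_of_mul_eq_one_right (by rw [mul_comm] at hb; exact hb)
  have hval := DegLB.L_value F hn β hβ0 hβ1 hβm f hfq
  have hzero : DegLB.L F f = 0 := by
    conv_lhs => rw [← MvPolynomial.support_sum_monomial_coeff f]
    rw [DegLB.L_additive]
    refine Finset.sum_eq_zero fun d hd => ?_
    exact DegLB.L_monomial_eq_zero F d _ (lt_of_le_of_lt (MvPolynomial.le_totalDegree hd) hlt)
  rw [hzero] at hval
  have hne : (β * (1 - β ^ 2))⁻¹ * (-2 : F) ^ n ≠ 0 := by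
    apply mul_ne_zero
    · apply inv_ne_zero
      apply mul_ne_zero hβ0
      have he : (1 : F) - β ^ 2 = (1 - β) * (1 + β) := by ring
      rw [he]
      exact mul_ne_zero (sub_ne_zero.mpr (Ne.symm hβ1)) (fun h => hβm (by linear_combination h))
    · exact pow_ne_zero _ (neg_ne_zero.mpr h2ne)
  exact hne hval.symm
end

section
/- Let F be a field of characteristic 0 or at least 5, n ≥ 1, and β ∈ F with β ∉ {−1, 0, 1}. Let f ∈ F[x_1,…,x_{2n}, y_1,…,y_{2n}] be multilinear and agree with 1/Q on the Boolean cube. Then for every σ ∈ {0,1}^n, the coefficient in f of the degree-2n monomial x_{S_σ} · y_{[2n]∖S_σ} equals 1/(β(1−β)) if ∑_{i=1}^n σ_i is even, and equals 1/(β(1+β)) if ∑_{i=1}^n σ_i is odd. In particular, f has 2^n monomials of degree 2n with nonzero coefficients. -/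
open MvPolynomial

/-- For `i ∈ [n]` and a bit `b`, the element of `[2n]` belonging to the `i`-th pair:
`2i−1` (0-based: `2i`) if `b = false`, and `2i` (0-based: `2i+1`) if `b = true`. -/
def pairIdx (n : ℕ) (i : Fin n) (b : Bool) : Fin (2 * n) :=
  if b then ⟨2 * i.1 + 1, by have := i.2; omega⟩ else ⟨2 * i.1, by have := i.2; omega⟩

/-- The exponent vector of the degree-`2n` monomial `x_{S_σ} · y_{[2n]∖S_σ}`, where
`S_σ = { 2i−1 : σ_i = 0 } ∪ { 2i : σ_i = 1 }`: from the `i`-th pair we pick the `x`-variable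
indexed by `pairIdx n i (σ i)` and the `y`-variable with the complementary index. -/
noncomputable def sigmaMonomial (n : ℕ) (σ : Fin n → Bool) :
    (Fin (2 * n) ⊕ Fin (2 * n)) →₀ ℕ :=
  ∑ i : Fin n,
    (Finsupp.single (Sum.inl (pairIdx n i (σ i))) 1
      + Finsupp.single (Sum.inr (pairIdx n i (!σ i))) 1)


namespace Stmt10
variable {F : Type*} [Field F] {ι : Type*} [DecidableEq ι]

noncomputable def ind (M : Finset ι) : ι →₀ ℕ := ∑ v ∈ M, Finsupp.single v 1

lemma ind_apply (M : Finset ι) (v : ι) : ind M v = if v ∈ M then 1 else 0 := by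
  classical
  simp only [ind, Finsupp.finset_sum_apply, Finsupp.single_apply]
  simp [Finset.sum_ite_eq M v (fun _ => 1)]

lemma ind_support (M : Finset ι) : (ind M).support = M := by
  ext v; simp [Finsupp.mem_support_iff, ind_apply]

lemma ind_degsum (M : Finset ι) : ((ind M).sum fun _ e => e) = M.card := by
  rw [Finsupp.sum, ind_support]
  rw [Finset.sum_congr rfl (fun v hv => by rw [ind_apply, if_pos hv])]
  simp

lemma prod_indicator (C S : Finset ι) :
    (∏ v ∈ C, (if v ∈ S then (1:F) else 0)) = if C ⊆ S then 1 else 0 := by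
  by_cases h : C ⊆ S
  · rw [if_pos h, Finset.prod_congr rfl (fun v hv => if_pos (h hv)), Finset.prod_const_one]
  · rw [if_neg h]
    obtain ⟨v, hvC, hvS⟩ := Finset.not_subset.mp h
    exact Finset.prod_eq_zero hvC (if_neg hvS)

lemma altsum (M C : Finset ι) :
    (∑ S ∈ M.powerset, (if C ⊆ S then (-1:F)^(M.card - S.card) else 0)) =
      if C = M then 1 else 0 := by
  by_cases hCM : C ⊆ M
  · have key := Finset.prod_add (fun _ : ι => (1:F)) (fun v => if v ∈ C then 0 else -1) M
    have lhs : (∏ v ∈ M, ((1:F) + if v ∈ C then 0 else -1)) = if C = M then 1 else 0 := by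
      have : ∀ v ∈ M, ((1:F) + if v ∈ C then 0 else -1) = if v ∈ C then 1 else 0 := by
        intro v _; split <;> ring
      rw [Finset.prod_congr rfl this, prod_indicator]
      congr 1
      simp only [eq_iff_iff]
      constructor
      · intro h; exact Finset.Subset.antisymm hCM h
      · intro h; rw [h]
    rw [key] at lhs
    rw [← lhs]
    apply Finset.sum_congr rfl
    intro S hS
    rw [Finset.mem_powerset] at hS
    rw [Finset.prod_const_one, one_mul]
    by_cases hCS : C ⊆ S
    · rw [if_pos hCS]
      have : ∀ v ∈ M \ S, (if v ∈ C then (0:F) else -1) = -1 := by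
        intro v hv
        rw [Finset.mem_sdiff] at hv
        rw [if_neg (fun hvC => hv.2 (hCS hvC))]
      rw [Finset.prod_congr rfl this, Finset.prod_const, Finset.card_sdiff_of_subset hS]
    · rw [if_neg hCS]
      obtain ⟨v, hvC, hvS⟩ := Finset.not_subset.mp hCS
      symm
      apply Finset.prod_eq_zero (Finset.mem_sdiff.mpr ⟨hCM hvC, hvS⟩)
      exact if_pos hvC
  · have h1 : ∀ S ∈ M.powerset, (if C ⊆ S then (-1:F)^(M.card - S.card) else 0) = 0 := by
      intro S hS
      rw [Finset.mem_powerset] at hS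
      rw [if_neg (fun h => hCM (h.trans hS))]
    rw [Finset.sum_congr rfl h1, Finset.sum_const_zero]
    rw [if_neg (fun h : C = M => hCM (le_of_eq h))]

end Stmt10

namespace Stmt10
variable {F : Type*} [Field F] {ι : Type*} [DecidableEq ι]

lemma coeff_ind (f : MvPolynomial ι F) (hml : ∀ v, f.degreeOf v ≤ 1) (M : Finset ι) :
    f.coeff (ind M) =
      ∑ S ∈ M.powerset, (-1:F)^(M.card - S.card) *
        eval (fun v => if v ∈ S then (1:F) else 0) f := by
  classical
  have hc1 : ∀ c ∈ f.support, ∀ v, c v ≤ 1 := by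
    intro c hc v
    have h := hml v
    rw [MvPolynomial.degreeOf_eq_sup] at h
    exact le_trans (Finset.le_sup (f := fun m => m v) hc) h
  have heval : ∀ S : Finset ι, eval (fun v => if v ∈ S then (1:F) else 0) f
      = ∑ c ∈ f.support, f.coeff c * (if c.support ⊆ S then 1 else 0) := by
    intro S
    rw [eval_eq]
    apply Finset.sum_congr rfl
    intro c hc
    congr 1
    rw [← prod_indicator c.support S]
    apply Finset.prod_congr rfl
    intro v hv
    have h1 : c v = 1 :=
      le_antisymm (hc1 c hc v) (Nat.pos_of_ne_zero (Finsupp.mem_support_iff.mp hv))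
    rw [h1, pow_one]
  have key : (∑ S ∈ M.powerset, (-1:F)^(M.card - S.card) *
        eval (fun v => if v ∈ S then (1:F) else 0) f)
       = ∑ c ∈ f.support, f.coeff c * (if c.support = M then 1 else 0) := by
    simp_rw [heval, Finset.mul_sum]
    rw [Finset.sum_comm]
    apply Finset.sum_congr rfl
    intro c _
    rw [← altsum M c.support, Finset.mul_sum]
    apply Finset.sum_congr rfl
    intro S _
    split <;> ring
  rw [key]
  have hiff : ∀ c ∈ f.support, (if c.support = M then (1:F) else 0) =
      (if c = ind M then 1 else 0) := by
    intro c hc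
    congr 1
    simp only [eq_iff_iff]
    constructor
    · intro h
      ext v
      rw [ind_apply]
      by_cases hv : v ∈ M
      · rw [if_pos hv]
        have : v ∈ c.support := h ▸ hv
        exact le_antisymm (hc1 c hc v) (Nat.pos_of_ne_zero (Finsupp.mem_support_iff.mp this))
      · rw [if_neg hv]
        by_contra hne
        exact hv (h ▸ Finsupp.mem_support_iff.mpr hne)
    · intro h; rw [h, ind_support]
  rw [Finset.sum_congr rfl (fun c hc => by rw [hiff c hc])]
  simp_rw [mul_ite, mul_one, mul_zero]
  rw [Finset.sum_ite_eq' f.support (ind M) (fun c => f.coeff c)]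
  split
  · rfl
  · next h => rw [MvPolynomial.notMem_support_iff.mp h]

end Stmt10

namespace Stmt10
variable {F : Type*} [Field F] {n : ℕ}

lemma pairIdx_val (i : Fin n) (b : Bool) :
    (pairIdx n i b).1 = 2 * i.1 + (if b then 1 else 0) := by
  cases b <;> simp [pairIdx]

lemma pairIdx_inj {i j : Fin n} {b c : Bool} (h : pairIdx n i b = pairIdx n j c) :
    i = j ∧ b = c := by
  have hv := congrArg Fin.val h
  rw [pairIdx_val, pairIdx_val] at hv
  cases b <;> cases c <;> simp at hv
  · exact ⟨Fin.ext (by omega), rfl⟩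
  · exact absurd hv (by omega)
  · exact absurd hv (by omega)
  · exact ⟨Fin.ext (by omega), rfl⟩

def Mset (n : ℕ) (σ : Fin n → Bool) : Finset (Fin (2*n) ⊕ Fin (2*n)) :=
  (Finset.univ.image fun i => Sum.inl (pairIdx n i (σ i))) ∪
    (Finset.univ.image fun i => Sum.inr (pairIdx n i (!σ i)))

lemma inl_mem_Mset {σ : Fin n → Bool} {i : Fin n} {b : Bool} :
    Sum.inl (pairIdx n i b) ∈ Mset n σ ↔ σ i = b := by
  simp only [Mset, Finset.mem_union, Finset.mem_image, Finset.mem_univ, true_and]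
  constructor
  · rintro (⟨j, hj⟩ | ⟨j, hj⟩)
    · obtain ⟨h1, h2⟩ := pairIdx_inj (Sum.inl.inj hj)
      rw [h1] at h2; exact h2
    · exact absurd hj (by simp)
  · intro h; exact Or.inl ⟨i, by rw [h]⟩

lemma inr_mem_Mset {σ : Fin n → Bool} {i : Fin n} {b : Bool} :
    Sum.inr (pairIdx n i b) ∈ Mset n σ ↔ (!σ i) = b := by
  simp only [Mset, Finset.mem_union, Finset.mem_image, Finset.mem_univ, true_and]
  constructor
  · rintro (⟨j, hj⟩ | ⟨j, hj⟩)
    · exact absurd hj (by simp)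
    · obtain ⟨h1, h2⟩ := pairIdx_inj (Sum.inr.inj hj)
      rw [h1] at h2; exact h2
  · intro h; exact Or.inr ⟨i, by rw [h]⟩

lemma inl_inj (σ : Fin n → Bool) :
    Function.Injective (fun i : Fin n => Sum.inl (α := Fin (2*n)) (β := Fin (2*n)) (pairIdx n i (σ i))) :=
  fun _ _ h => (pairIdx_inj (Sum.inl.inj h)).1

lemma inr_inj (σ : Fin n → Bool) :
    Function.Injective (fun i : Fin n => Sum.inr (α := Fin (2*n)) (β := Fin (2*n)) (pairIdx n i (!σ i))) :=
  fun _ _ h => (pairIdx_inj (Sum.inr.inj h)).1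

lemma Mset_disj (σ : Fin n → Bool) :
    Disjoint (Finset.univ.image fun i : Fin n => Sum.inl (α := Fin (2*n)) (β := Fin (2*n)) (pairIdx n i (σ i)))
      (Finset.univ.image fun i : Fin n => Sum.inr (pairIdx n i (!σ i))) := by
  rw [Finset.disjoint_left]
  rintro v hv1 hv2
  simp only [Finset.mem_image, Finset.mem_univ, true_and] at hv1 hv2
  obtain ⟨i, hi⟩ := hv1
  obtain ⟨j, hj⟩ := hv2
  rw [← hi] at hj
  cases hj

lemma Mset_card (σ : Fin n → Bool) : (Mset n σ).card = 2 * n := by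
  rw [Mset, Finset.card_union_of_disjoint (Mset_disj σ),
    Finset.card_image_of_injective _ (inl_inj σ), Finset.card_image_of_injective _ (inr_inj σ),
    Finset.card_univ, Fintype.card_fin]
  omega

lemma sigmaMonomial_eq_ind (σ : Fin n → Bool) : sigmaMonomial n σ = ind (Mset n σ) := by
  rw [sigmaMonomial, ind, Mset, Finset.sum_union (Mset_disj σ),
    Finset.sum_image (fun x _ y _ h => inl_inj σ h),
    Finset.sum_image (fun x _ y _ h => inr_inj σ h),
    Finset.sum_add_distrib]

lemma eval_Qtilde_indicator (σ : Fin n → Bool) (S : Finset (Fin (2*n) ⊕ Fin (2*n)))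
    (hS : S ⊆ Mset n σ) :
    eval (fun v => if v ∈ S then (1:F) else 0) (Qtilde F n)
      = if Mset n σ ⊆ S then
          (-1:F) ^ (Finset.univ.filter fun i => σ i = true).card else 0 := by
  classical
  rw [Qtilde, map_prod]
  have hfac : ∀ i ∈ (Finset.univ : Finset (Fin n)),
      eval (fun v => if v ∈ S then (1:F) else 0)
        ((X (Sum.inl ⟨2 * i.1, by have := i.2; omega⟩) : MvPolynomial (Fin (2*n) ⊕ Fin (2*n)) F)
            * X (Sum.inr ⟨2 * i.1 + 1, by have := i.2; omega⟩)
          - X (Sum.inr ⟨2 * i.1, by have := i.2; omega⟩) * X (Sum.inl ⟨2 * i.1 + 1, by have := i.2; omega⟩))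
      = (if σ i = true then (-1:F) else 1) *
          ((if Sum.inl (pairIdx n i (σ i)) ∈ S then (1:F) else 0) *
            (if Sum.inr (pairIdx n i (!σ i)) ∈ S then (1:F) else 0)) := by
    intro i _
    simp only [map_sub, map_mul, eval_X]
    show (if Sum.inl (pairIdx n i false) ∈ S then (1:F) else 0)
          * (if Sum.inr (pairIdx n i true) ∈ S then (1:F) else 0)
        - (if Sum.inr (pairIdx n i false) ∈ S then (1:F) else 0)
          * (if Sum.inl (pairIdx n i true) ∈ S then (1:F) else 0) = _
    cases hσ : σ i with
    | false =>
      have hz1 : (if Sum.inl (pairIdx n i true) ∈ S then (1:F) else 0) = 0 := by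
        apply if_neg; intro hmem
        have := inl_mem_Mset.mp (hS hmem); rw [hσ] at this; simp at this
      have hz2 : (if Sum.inr (pairIdx n i false) ∈ S then (1:F) else 0) = 0 := by
        apply if_neg; intro hmem
        have := inr_mem_Mset.mp (hS hmem); rw [hσ] at this; simp at this
      rw [hz1, hz2]
      have h1 : (if (false = true) then (-1:F) else 1) = 1 := by simp
      rw [h1, Bool.not_false]
      ring
    | true =>
      have hz1 : (if Sum.inl (pairIdx n i false) ∈ S then (1:F) else 0) = 0 := by
        apply if_neg; intro hmem
        have := inl_mem_Mset.mp (hS hmem); rw [hσ] at this; simp at this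
      have hz2 : (if Sum.inr (pairIdx n i true) ∈ S then (1:F) else 0) = 0 := by
        apply if_neg; intro hmem
        have := inr_mem_Mset.mp (hS hmem); rw [hσ] at this; simp at this
      rw [hz1, hz2]
      have h1 : (if (true = true) then (-1:F) else 1) = -1 := by simp
      rw [h1, Bool.not_true]
      ring
  rw [Finset.prod_congr rfl hfac, Finset.prod_mul_distrib]
  have hsign : (∏ i : Fin n, (if σ i = true then (-1:F) else 1))
      = (-1:F) ^ (Finset.univ.filter fun i => σ i = true).card := by
    rw [Finset.prod_ite (fun _ => (-1:F)) (fun _ => (1:F)), Finset.prod_const,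
      Finset.prod_const_one, mul_one]
  rw [hsign]
  by_cases hMS : Mset n σ ⊆ S
  · rw [if_pos hMS]
    have : ∀ i ∈ (Finset.univ : Finset (Fin n)),
        ((if Sum.inl (pairIdx n i (σ i)) ∈ S then (1:F) else 0) *
          (if Sum.inr (pairIdx n i (!σ i)) ∈ S then (1:F) else 0)) = 1 := by
      intro i _
      rw [if_pos (hMS (inl_mem_Mset.mpr rfl)), if_pos (hMS (inr_mem_Mset.mpr rfl)), mul_one]
    rw [Finset.prod_congr rfl this, Finset.prod_const_one, mul_one]
  · rw [if_neg hMS]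
    obtain ⟨v, hvM, hvS⟩ := Finset.not_subset.mp hMS
    have : ∃ j : Fin n, ((if Sum.inl (pairIdx n j (σ j)) ∈ S then (1:F) else 0) *
        (if Sum.inr (pairIdx n j (!σ j)) ∈ S then (1:F) else 0)) = 0 := by
      rw [Mset, Finset.mem_union] at hvM
      rcases hvM with h | h <;>
        simp only [Finset.mem_image, Finset.mem_univ, true_and] at h <;>
        obtain ⟨j, hj⟩ := h <;> refine ⟨j, ?_⟩ <;> rw [← hj] at hvS
      · rw [if_neg hvS, zero_mul]
      · rw [if_neg hvS, mul_zero]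
    obtain ⟨j, hj⟩ := this
    rw [Finset.prod_eq_zero (Finset.mem_univ j) hj, mul_zero]

end Stmt10

/-- Let `F` have characteristic `0` or at least `5`, `n ≥ 1`, and
`β ∉ {−1,0,1}`. Let `f` be multilinear and agree with `1/Q` on the Boolean cube. Then for
every `σ ∈ {0,1}^n` the coefficient in `f` of `x_{S_σ} · y_{[2n]∖S_σ}` equals
`1/(β(1−β))` if `∑_i σ_i` is even and `1/(β(1+β))` if it is odd; in particular `f` has (at
least) `2^n` monomials of degree `2n` with nonzero coefficients. -/
theorem coeff_sigma_monomials_of_inverse_of_Q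
    (F : Type*) [Field F] (n : ℕ) (hn : 1 ≤ n)
    (hchar : ringChar F = 0 ∨ 5 ≤ ringChar F)
    (β : F) (hβ : β ∉ ({-1, 0, 1} : Set F))
    (f : MvPolynomial (Fin (2 * n) ⊕ Fin (2 * n)) F)
    (hml : ∀ v, f.degreeOf v ≤ 1)
    (hf : ∀ a b : Fin (2 * n) → F, (∀ i, a i = 0 ∨ a i = 1) → (∀ i, b i = 0 ∨ b i = 1) →
      eval (Sum.elim a b) f * eval (Sum.elim a b) (Qtilde F n - C β) = 1) :
    (∀ σ : Fin n → Bool,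
      coeff (sigmaMonomial n σ) f =
        if Even (Finset.univ.filter fun i => σ i = true).card then (β * (1 - β))⁻¹
        else (β * (1 + β))⁻¹) ∧
    2 ^ n ≤ (f.support.filter fun m => (m.sum fun _ e => e) = 2 * n).card := by
  classical
  simp only [Set.mem_insert_iff, Set.mem_singleton_iff] at hβ
  push_neg at hβ
  obtain ⟨hβm1, hβ0, hβ1⟩ := hβ
  have h1mβ : 1 - β ≠ 0 := sub_ne_zero.mpr (Ne.symm hβ1)
  have h1pβ : 1 + β ≠ 0 := fun h => hβm1 (by linear_combination h)
  have part1 : ∀ σ : Fin n → Bool,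
      coeff (sigmaMonomial n σ) f =
        if Even (Finset.univ.filter fun i => σ i = true).card then (β * (1 - β))⁻¹
        else (β * (1 + β))⁻¹ := by
    intro σ
    set k := (Finset.univ.filter fun i => σ i = true).card with hk
    set M := Stmt10.Mset n σ with hM
    have hMcard : M.card = 2 * n := Stmt10.Mset_card σ
    have heval : ∀ S ∈ M.powerset,
        (-1:F)^(M.card - S.card) * eval (fun v => if v ∈ S then (1:F) else 0) f
          = (-1:F)^(M.card - S.card) * ((if M ⊆ S then (-1:F)^k else 0) - β)⁻¹ := by
      intro S hS
      rw [Finset.mem_powerset] at hS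
      congr 1
      set a : Fin (2*n) → F := fun i => if Sum.inl i ∈ S then (1:F) else 0 with ha
      set b : Fin (2*n) → F := fun i => if Sum.inr i ∈ S then (1:F) else 0 with hb
      have hab : Sum.elim a b = fun v => if v ∈ S then (1:F) else 0 := by
        funext v; cases v <;> rfl
      have h := hf a b
        (fun i => by
          by_cases h : Sum.inl i ∈ S
          · exact Or.inr (if_pos h)
          · exact Or.inl (if_neg h))
        (fun i => by
          by_cases h : Sum.inr i ∈ S
          · exact Or.inr (if_pos h)
          · exact Or.inl (if_neg h))
      rw [hab, map_sub, eval_C, Stmt10.eval_Qtilde_indicator σ S hS] at h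
      exact eq_inv_of_mul_eq_one_left h
    rw [Stmt10.sigmaMonomial_eq_ind, Stmt10.coeff_ind f hml, ← hM,
      Finset.sum_congr rfl heval]
    have hMmem : M ∈ M.powerset := Finset.mem_powerset_self M
    rw [← Finset.add_sum_erase _ _ hMmem]
    have hterm1 : (-1:F)^(M.card - M.card) * ((if M ⊆ M then (-1:F)^k else 0) - β)⁻¹
        = ((-1:F)^k - β)⁻¹ := by
      rw [Nat.sub_self, pow_zero, one_mul, if_pos (Finset.Subset.refl M)]
    rw [hterm1]
    have hterm2 : ∀ S ∈ M.powerset.erase M,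
        (-1:F)^(M.card - S.card) * ((if M ⊆ S then (-1:F)^k else 0) - β)⁻¹
          = (-1:F)^(M.card - S.card) * (-β)⁻¹ := by
      intro S hS
      rw [Finset.mem_erase] at hS
      have hSM : S ⊆ M := Finset.mem_powerset.mp hS.2
      rw [if_neg (fun h => hS.1 (Finset.Subset.antisymm hSM h)), zero_sub]
    rw [Finset.sum_congr rfl hterm2, ← Finset.sum_mul]
    have hA : (∑ S ∈ M.powerset, (-1:F)^(M.card - S.card)) = 0 := by
      have h := Stmt10.altsum (F := F) M ∅
      simp only [Finset.empty_subset, if_true] at h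
      rw [h, if_neg]
      intro hc
      rw [← hc] at hMcard
      simp only [Finset.card_empty] at hMcard
      omega
    have hE : (∑ S ∈ M.powerset.erase M, (-1:F)^(M.card - S.card)) = -1 := by
      have h := Finset.add_sum_erase M.powerset (fun S => (-1:F)^(M.card - S.card)) hMmem
      rw [hA] at h
      simp only [Nat.sub_self, pow_zero] at h
      linear_combination h
    rw [hE]
    by_cases hk2 : Even k
    · rw [if_pos hk2, Even.neg_one_pow hk2]
      field_simp
      ring
    · rw [if_neg hk2, Odd.neg_one_pow (Nat.not_even_iff_odd.mp hk2)]
      rw [show ((-1:F) - β) = -(1+β) by ring, inv_neg, inv_neg]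
      field_simp
      ring
  refine ⟨part1, ?_⟩
  have hinj : Function.Injective (fun σ : Fin n → Bool => sigmaMonomial n σ) := by
    intro σ σ' h
    simp only [Stmt10.sigmaMonomial_eq_ind] at h
    have hM : Stmt10.Mset n σ = Stmt10.Mset n σ' := by
      rw [← Stmt10.ind_support (Stmt10.Mset n σ), h, Stmt10.ind_support]
    funext i
    have hmem : Sum.inl (pairIdx n i (σ i)) ∈ Stmt10.Mset n σ := Stmt10.inl_mem_Mset.mpr rfl
    rw [hM] at hmem
    exact (Stmt10.inl_mem_Mset.mp hmem).symm
  have hsub : (Finset.univ.image fun σ : Fin n → Bool => sigmaMonomial n σ) ⊆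
      f.support.filter fun m => (m.sum fun _ e => e) = 2 * n := by
    intro m hm
    simp only [Finset.mem_image, Finset.mem_univ, true_and] at hm
    obtain ⟨σ, rfl⟩ := hm
    rw [Finset.mem_filter]
    refine ⟨?_, ?_⟩
    · rw [MvPolynomial.mem_support_iff, part1 σ]
      split
      · exact inv_ne_zero (mul_ne_zero hβ0 h1mβ)
      · exact inv_ne_zero (mul_ne_zero hβ0 h1pβ)
    · rw [Stmt10.sigmaMonomial_eq_ind, Stmt10.ind_degsum, Stmt10.Mset_card]
  calc 2^n = (Finset.univ.image fun σ : Fin n → Bool => sigmaMonomial n σ).card := by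
        rw [Finset.card_image_of_injective _ hinj, Finset.card_univ, Fintype.card_fun,
          Fintype.card_bool, Fintype.card_fin]
    _ ≤ _ := Finset.card_le_card hsub
end

section
/- Let F be a field, n ≥ 1, β ∈ F with β ∉ {−1, 0, 1}, and let f ∈ F[x_1,…,x_{2n}, y_1,…,y_{2n}] be multilinear and agree with 1/Q on the Boolean cube. Then for every S ⊆ [2n] with 0 < |S| < n and every T ⊆ [2n], the coefficient in f of the monomial x_S · y_T is 0, and the coefficient in f of the monomial x_T · y_S is 0. -/
open MvPolynomial

/-- The exponent vector of the multilinear monomial `x_A · y_B` for `A, B ⊆ [2n]`. -/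
noncomputable def setMonomial (n : ℕ) (A B : Finset (Fin (2 * n))) :
    (Fin (2 * n) ⊕ Fin (2 * n)) →₀ ℕ :=
  (∑ i ∈ A, Finsupp.single (Sum.inl i) 1) + ∑ i ∈ B, Finsupp.single (Sum.inr i) 1



section Helpers
variable {σ : Type*} [DecidableEq σ] {F : Type*} [Field F]

/-- indicator function of a finset -/
noncomputable def indFun (F : Type*) [Field F] (A : Finset σ) : σ → F :=
  fun i => if i ∈ A then 1 else 0

/-- exponent vector of multilinear monomial with support S -/
noncomputable def eS (S : Finset σ) : σ →₀ ℕ := ∑ i ∈ S, Finsupp.single i 1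

lemma eS_apply (S : Finset σ) (j : σ) : eS S j = if j ∈ S then 1 else 0 := by
  classical
  simp only [eS, Finset.sum_apply', Finsupp.single_apply]
  rw [Finset.sum_ite_eq' S j (fun _ => 1)]

lemma neg_one_powerset_sum (S : Finset σ) :
    (∑ A ∈ S.powerset, (-1 : F) ^ A.card) = if S = ∅ then 1 else 0 := by
  have h := Finset.sum_powerset_neg_one_pow_card (x := S)
  have : ((∑ A ∈ S.powerset, (-1 : ℤ) ^ A.card : ℤ) : F)
      = ∑ A ∈ S.powerset, (-1 : F) ^ A.card := by push_cast; ring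
  rw [← this, h]
  split <;> simp

lemma eval_indFun (f : MvPolynomial σ F) (A : Finset σ) :
    eval (indFun F A) f = ∑ d ∈ f.support.filter (fun d => d.support ⊆ A), coeff d f := by
  rw [eval_eq, Finset.sum_filter]
  apply Finset.sum_congr rfl
  intro d _
  by_cases h : d.support ⊆ A
  · rw [if_pos h]
    have h1 : ∏ i ∈ d.support, indFun F A i ^ d i = 1 := by
      apply Finset.prod_eq_one
      intro i hi
      have : i ∈ A := h hi
      simp [indFun, this]
    rw [h1, mul_one]
  · rw [if_neg h]
    obtain ⟨i, hi, hiA⟩ := Finset.not_subset.mp h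
    have h1 : ∏ i ∈ d.support, indFun F A i ^ d i = 0 := by
      apply Finset.prod_eq_zero hi
      have hd0 : d i ≠ 0 := Finsupp.mem_support_iff.mp hi
      simp [indFun, hiA, zero_pow hd0]
    rw [h1, mul_zero]

lemma innerSumAux (D S : Finset σ) :
    ∑ A ∈ S.powerset.filter (fun A => D ⊆ A), (-1 : F) ^ A.card
      = if D = S then (-1 : F) ^ S.card else 0 := by
  by_cases hDS : D ⊆ S
  · have hbij : ∑ A ∈ S.powerset.filter (fun A => D ⊆ A), (-1 : F) ^ A.card
        = ∑ B ∈ (S \ D).powerset, (-1 : F) ^ (B ∪ D).card := by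
      apply Finset.sum_nbij' (i := fun A => A \ D) (j := fun B => B ∪ D)
      · intro A hA
        simp only [Finset.mem_filter, Finset.mem_powerset] at hA ⊢
        exact Finset.sdiff_subset_sdiff hA.1 (le_refl D)
      · intro B hB
        simp only [Finset.mem_filter, Finset.mem_powerset] at hB ⊢
        constructor
        · exact Finset.union_subset (hB.trans (Finset.sdiff_subset)) hDS
        · exact Finset.subset_union_right
      · intro A hA
        simp only [Finset.mem_filter, Finset.mem_powerset] at hA
        exact Finset.sdiff_union_of_subset hA.2
      · intro B hB
        simp only [Finset.mem_powerset] at hB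
        have hdisj : Disjoint B D := Finset.disjoint_of_subset_left hB Finset.sdiff_disjoint
        exact Finset.union_sdiff_cancel_right hdisj
      · intro A hA
        simp only [Finset.mem_filter, Finset.mem_powerset] at hA
        rw [Finset.sdiff_union_of_subset hA.2]
    rw [hbij]
    have hcard : ∀ B ∈ (S \ D).powerset, (-1 : F) ^ (B ∪ D).card
        = (-1 : F) ^ D.card * (-1 : F) ^ B.card := by
      intro B hB
      simp only [Finset.mem_powerset] at hB
      have hdisj : Disjoint B D := Finset.disjoint_of_subset_left hB Finset.sdiff_disjoint
      rw [Finset.card_union_of_disjoint hdisj, pow_add, mul_comm]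
    rw [Finset.sum_congr rfl hcard, ← Finset.mul_sum, neg_one_powerset_sum]
    by_cases hSD : S ⊆ D
    · have hDS' : D = S := Finset.Subset.antisymm hDS hSD
      rw [if_pos (Finset.sdiff_eq_empty_iff_subset.mpr hSD), if_pos hDS', hDS', mul_one]
    · rw [if_neg (fun h => hSD (Finset.sdiff_eq_empty_iff_subset.mp h)),
        if_neg (by rintro rfl; exact hSD (le_refl D)), mul_zero]
  · have hempty : S.powerset.filter (fun A => D ⊆ A) = ∅ := by
      rw [Finset.filter_eq_empty_iff]
      intro A hA hDA
      exact hDS (hDA.trans (Finset.mem_powerset.mp hA))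
    rw [hempty, Finset.sum_empty, if_neg (by rintro rfl; exact hDS (le_refl D))]

lemma coeff_eS (f : MvPolynomial σ F) (hml : ∀ v, f.degreeOf v ≤ 1) (S : Finset σ) :
    coeff (eS S) f = ∑ A ∈ S.powerset, (-1 : F) ^ (S.card + A.card) * eval (indFun F A) f := by
  have step1 : ∀ A ∈ S.powerset, (-1 : F) ^ (S.card + A.card) * eval (indFun F A) f
      = ∑ d ∈ f.support, (if d.support ⊆ A then (-1 : F) ^ (S.card + A.card) * coeff d f else 0) := by
    intro A _
    rw [eval_indFun, Finset.mul_sum, Finset.sum_filter]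
  rw [Finset.sum_congr rfl step1, Finset.sum_comm]
  have step2 : ∀ d ∈ f.support,
      (∑ A ∈ S.powerset, if d.support ⊆ A then (-1 : F) ^ (S.card + A.card) * coeff d f else 0)
      = (if d = eS S then coeff d f else 0) := by
    intro d hd
    have hsum : (∑ A ∈ S.powerset, if d.support ⊆ A then (-1 : F) ^ (S.card + A.card) * coeff d f else 0)
        = ((-1 : F) ^ S.card * coeff d f) * ∑ A ∈ S.powerset.filter (fun A => d.support ⊆ A), (-1 : F) ^ A.card := by
      rw [Finset.mul_sum, ← Finset.sum_filter]
      apply Finset.sum_congr rfl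
      intro A _
      rw [pow_add]; ring
    rw [hsum, innerSumAux]
    by_cases hds : d.support = S
    · rw [if_pos hds]
      have hd1 : ∀ i, d i ≤ 1 := by
        intro i
        calc d i ≤ f.degreeOf i := by
              rw [degreeOf_eq_sup]; exact Finset.le_sup (f := fun m => m i) hd
          _ ≤ 1 := hml i
      have : d = eS S := by
        ext i
        rw [eS_apply]
        have h1 := hd1 i
        by_cases hi : i ∈ S
        · rw [if_pos hi]
          have : d i ≠ 0 := by
            rw [← hds] at hi; exact Finsupp.mem_support_iff.mp hi
          omega
        · rw [if_neg hi]
          have : i ∉ d.support := by rw [hds]; exact hi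
          exact Finsupp.notMem_support_iff.mp this
      rw [if_pos this]
      have hsq : (-1 : F) ^ S.card * (-1 : F) ^ S.card = 1 := by
        rw [← pow_add, ← two_mul, pow_mul, neg_one_sq, one_pow]
      linear_combination coeff d f * hsq
    · rw [if_neg hds, mul_zero]
      have : d ≠ eS S := by
        intro h
        apply hds
        rw [h]
        ext i
        simp only [Finsupp.mem_support_iff, eS_apply]
        split <;> simp_all
      rw [if_neg this]
  rw [Finset.sum_congr rfl step2, Finset.sum_ite_eq' f.support (eS S) (fun d => coeff d f)]
  split
  · rfl
  · next h => exact MvPolynomial.notMem_support_iff.mp h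

/-- If eval of f is constant on all sub-indicators of a nonempty S, the coefficient vanishes. -/
lemma coeff_eS_eq_zero (f : MvPolynomial σ F) (hml : ∀ v, f.degreeOf v ≤ 1)
    (S : Finset σ) (hS : S.Nonempty) (c : F)
    (hc : ∀ A ∈ S.powerset, eval (indFun F A) f = c) :
    coeff (eS S) f = 0 := by
  rw [coeff_eS f hml S, Finset.sum_congr rfl (fun A hA => by rw [hc A hA, pow_add])]
  have : ∑ A ∈ S.powerset, (-1 : F) ^ S.card * (-1 : F) ^ A.card * c
      = ((-1 : F) ^ S.card * c) * ∑ A ∈ S.powerset, (-1 : F) ^ A.card := by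
    rw [Finset.mul_sum]; apply Finset.sum_congr rfl; intro A _; ring
  rw [this, neg_one_powerset_sum, if_neg (Finset.nonempty_iff_ne_empty.mp hS), mul_zero]

end Helpers

lemma exists_free_pair {n : ℕ} (S : Finset (Fin (2 * n))) (hSn : S.card < n) :
    ∃ i : Fin n, (⟨2 * i.1, by have := i.2; omega⟩ : Fin (2 * n)) ∉ S ∧
      (⟨2 * i.1 + 1, by have := i.2; omega⟩ : Fin (2 * n)) ∉ S := by
  by_contra h
  push_neg at h
  set g : Fin n → Fin (2 * n) := fun i =>
    if (⟨2 * i.1, by have := i.2; omega⟩ : Fin (2 * n)) ∈ S then ⟨2 * i.1, by have := i.2; omega⟩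
    else ⟨2 * i.1 + 1, by have := i.2; omega⟩ with hg
  have hmem : ∀ i : Fin n, g i ∈ S := by
    intro i
    rw [hg]
    dsimp only
    split
    · assumption
    · next h2 => exact h i h2
  have hval : ∀ i : Fin n, (g i).1 / 2 = i.1 := by
    intro i
    rw [hg]
    dsimp only
    split <;> simp <;> omega
  have hinj : Set.InjOn g (Finset.univ : Finset (Fin n)) := by
    intro i _ j _ hij
    have := hval i
    rw [hij, hval j] at this
    exact Fin.ext this.symm
  have := Finset.card_le_card_of_injOn g (fun i _ => hmem i) hinj
  simp at this
  omega

lemma Qtilde_eval_zero_left {F : Type*} [Field F] {n : ℕ} (a b : Fin (2 * n) → F) (i : Fin n)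
    (h1 : a ⟨2 * i.1, by have := i.2; omega⟩ = 0) (h2 : a ⟨2 * i.1 + 1, by have := i.2; omega⟩ = 0) :
    eval (Sum.elim a b) (Qtilde F n) = 0 := by
  rw [Qtilde, map_prod]
  apply Finset.prod_eq_zero (Finset.mem_univ i)
  simp [h1, h2]

lemma Qtilde_eval_zero_right {F : Type*} [Field F] {n : ℕ} (a b : Fin (2 * n) → F) (i : Fin n)
    (h1 : b ⟨2 * i.1, by have := i.2; omega⟩ = 0) (h2 : b ⟨2 * i.1 + 1, by have := i.2; omega⟩ = 0) :
    eval (Sum.elim a b) (Qtilde F n) = 0 := by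
  rw [Qtilde, map_prod]
  apply Finset.prod_eq_zero (Finset.mem_univ i)
  simp [h1, h2]


lemma setMonomial_eq (n : ℕ) (A B : Finset (Fin (2 * n))) :
    setMonomial n A B
      = eS ((A.map ⟨Sum.inl, Sum.inl_injective⟩) ∪ (B.map ⟨Sum.inr, Sum.inr_injective⟩)) := by
  rw [eS, Finset.sum_union (by simp [Finset.disjoint_left]), Finset.sum_map, Finset.sum_map,
    setMonomial]
  rfl

/-- Let `F` be a field, `n ≥ 1`, `β ∉ {−1,0,1}`, and let `f` be multilinear
and agree with `1/Q` on the Boolean cube. Then for every `S ⊆ [2n]` with `0 < |S| < n` and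
every `T ⊆ [2n]`, the coefficients in `f` of the monomials `x_S · y_T` and `x_T · y_S`
are both `0`. -/
theorem coeff_small_support_vanishes_of_inverse_of_Q
    (F : Type*) [Field F] (n : ℕ) (hn : 1 ≤ n)
    (β : F) (hβ : β ∉ ({-1, 0, 1} : Set F))
    (f : MvPolynomial (Fin (2 * n) ⊕ Fin (2 * n)) F)
    (hml : ∀ v, f.degreeOf v ≤ 1)
    (hf : ∀ a b : Fin (2 * n) → F, (∀ i, a i = 0 ∨ a i = 1) → (∀ i, b i = 0 ∨ b i = 1) →
      eval (Sum.elim a b) f * eval (Sum.elim a b) (Qtilde F n - C β) = 1)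
    (S T : Finset (Fin (2 * n))) (hS0 : 0 < S.card) (hSn : S.card < n) :
    coeff (setMonomial n S T) f = 0 ∧ coeff (setMonomial n T S) f = 0 := by
  obtain ⟨i0, hi0a, hi0b⟩ := exists_free_pair S hSn
  obtain ⟨s0, hs0⟩ := Finset.card_pos.mp hS0
  constructor
  · rw [setMonomial_eq]
    apply coeff_eS_eq_zero f hml _ ?_ ((-β)⁻¹)
    · intro A hA
      rw [Finset.mem_powerset] at hA
      set a : Fin (2 * n) → F := fun i => if Sum.inl i ∈ A then 1 else 0 with ha_def
      set b : Fin (2 * n) → F := fun i => if Sum.inr i ∈ A then 1 else 0 with hb_def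
      have hab : indFun F A = Sum.elim a b := by funext j; cases j <;> rfl
      have ha : ∀ i, a i = 0 ∨ a i = 1 := by
        intro i; by_cases h : Sum.inl i ∈ A <;> simp [ha_def, h]
      have hb : ∀ i, b i = 0 ∨ b i = 1 := by
        intro i; by_cases h : Sum.inr i ∈ A <;> simp [hb_def, h]
      have key := hf a b ha hb
      have hnotinA : ∀ j : Fin (2 * n), j ∉ S → Sum.inl j ∉ A := by
        intro j hj hjA
        have := hA hjA
        simp only [Finset.mem_union, Finset.mem_map, Function.Embedding.coeFn_mk] at this
        rcases this with ⟨x, hx, hxe⟩ | ⟨x, _, hxe⟩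
        · rw [Sum.inl.injEq] at hxe; subst hxe; exact hj hx
        · exact Sum.inr_ne_inl hxe
      have hQ : eval (Sum.elim a b) (Qtilde F n) = 0 := by
        apply Qtilde_eval_zero_left a b i0
        · simp only [ha_def]; rw [if_neg (hnotinA _ hi0a)]
        · simp only [ha_def]; rw [if_neg (hnotinA _ hi0b)]
      rw [map_sub, hQ, eval_C, zero_sub] at key
      rw [hab]
      exact eq_inv_of_mul_eq_one_left key
    · exact ⟨Sum.inl s0, by simp [hs0]⟩
  · rw [setMonomial_eq]
    apply coeff_eS_eq_zero f hml _ ?_ ((-β)⁻¹)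
    · intro A hA
      rw [Finset.mem_powerset] at hA
      set a : Fin (2 * n) → F := fun i => if Sum.inl i ∈ A then 1 else 0 with ha_def
      set b : Fin (2 * n) → F := fun i => if Sum.inr i ∈ A then 1 else 0 with hb_def
      have hab : indFun F A = Sum.elim a b := by funext j; cases j <;> rfl
      have ha : ∀ i, a i = 0 ∨ a i = 1 := by
        intro i; by_cases h : Sum.inl i ∈ A <;> simp [ha_def, h]
      have hb : ∀ i, b i = 0 ∨ b i = 1 := by
        intro i; by_cases h : Sum.inr i ∈ A <;> simp [hb_def, h]
      have key := hf a b ha hb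
      have hnotinA : ∀ j : Fin (2 * n), j ∉ S → Sum.inr j ∉ A := by
        intro j hj hjA
        have := hA hjA
        simp only [Finset.mem_union, Finset.mem_map, Function.Embedding.coeFn_mk] at this
        rcases this with ⟨x, _, hxe⟩ | ⟨x, hx, hxe⟩
        · exact Sum.inl_ne_inr hxe
        · rw [Sum.inr.injEq] at hxe; subst hxe; exact hj hx
      have hQ : eval (Sum.elim a b) (Qtilde F n) = 0 := by
        apply Qtilde_eval_zero_right a b i0
        · simp only [hb_def]; rw [if_neg (hnotinA _ hi0a)]
        · simp only [hb_def]; rw [if_neg (hnotinA _ hi0b)]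
      rw [map_sub, hQ, eval_C, zero_sub] at key
      rw [hab]
      exact eq_inv_of_mul_eq_one_left key
    · exact ⟨Sum.inr s0, by simp [hs0]⟩
end

section
/- Let F be a field of characteristic 0 or at least 5, n ≥ 1, β ∈ F with β ∉ {−1, 0, 1}, and let f ∈ F[x_1,…,x_{2n}, y_1,…,y_{2n}] be multilinear and agree with 1/Q on the Boolean cube. Write f uniquely as f = ∑_{B ⊆ [2n]} g_B(x̄) · y_B where each g_B ∈ F[x_1,…,x_{2n}] is multilinear. Then the F-linear span of { g_B : B ⊆ [2n] } in F[x_1,…,x_{2n}] has dimension at least 2^n. (This is the coefficient-dimension lower bound underlying the exponential roABP-IPS_LIN size lower bound for Q.) -/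
open MvPolynomial

namespace InvQAux

variable {F : Type*} [Field F]

def dd (b c : Bool) : F := if b && c then 0 else 1
def ee (b c : Bool) : F := if b then (if c then -1 else 1) else (if c then 1 else 0)
def zf (b : Bool) : F := if b then 0 else 1

lemma sum_pi_prod {n : ℕ} (h : Fin n → Bool → F) :
    ∑ t : Fin n → Bool, ∏ i, h i (t i) = ∏ i, (h i false + h i true) := by
  rw [← Fintype.prod_sum h]
  congr 1
  funext i
  rw [Fintype.sum_bool]
  ring

lemma prod_delta {n : ℕ} (s u : Fin n → Bool) :
    (∏ i, if s i = u i then (1 : F) else 0) = if s = u then 1 else 0 := by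
  by_cases h : s = u
  · subst h; simp
  · rw [if_neg h]
    obtain ⟨i, hi⟩ : ∃ i, s i ≠ u i := by
      by_contra hc
      push_neg at hc
      exact h (funext hc)
    exact Finset.prod_eq_zero (Finset.mem_univ i) (by rw [if_neg hi])

def aPt (n : ℕ) (s : Fin n → Bool) : Fin (2 * n) → F := fun j =>
  if j.1 % 2 = 0 then 1 else (if s ⟨j.1 / 2, by have := j.2; omega⟩ then 1 else 0)

def bPt (n : ℕ) (t : Fin n → Bool) : Fin (2 * n) → F := fun j =>
  if j.1 % 2 = 0 then (if t ⟨j.1 / 2, by have := j.2; omega⟩ then 1 else 0) else 1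

lemma aPt_bool (n : ℕ) (s : Fin n → Bool) (j : Fin (2 * n)) :
    aPt (F := F) n s j = 0 ∨ aPt (F := F) n s j = 1 := by
  unfold aPt; split_ifs <;> simp

lemma bPt_bool (n : ℕ) (t : Fin n → Bool) (j : Fin (2 * n)) :
    bPt (F := F) n t j = 0 ∨ bPt (F := F) n t j = 1 := by
  unfold bPt; split_ifs <;> simp

lemma eval_Qtilde (n : ℕ) (s t : Fin n → Bool) :
    eval (Sum.elim (aPt (F := F) n s) (bPt (F := F) n t)) (Qtilde F n) = ∏ i, dd (s i) (t i) := by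
  unfold Qtilde
  rw [map_prod]
  apply Finset.prod_congr rfl
  intro i _
  have h1 : (2 * i.1) % 2 = 0 := by omega
  have h2 : (2 * i.1 + 1) % 2 = 1 := by omega
  have h3 : (⟨(2 * i.1) / 2, by have := i.2; omega⟩ : Fin n) = i := by
    apply Fin.ext; simp only [Fin.val_mk]; omega
  have h4 : (⟨(2 * i.1 + 1) / 2, by have := i.2; omega⟩ : Fin n) = i := by
    apply Fin.ext; simp only [Fin.val_mk]; omega
  simp only [map_sub, map_mul, eval_X, Sum.elim_inl, Sum.elim_inr, aPt, bPt, h1, h2]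
  simp only [h3, h4, if_true, if_pos, reduceIte]
  cases hs : s i <;> cases ht : t i <;> simp [dd]

/-- evaluation at all the points `aPt n s` as a linear map -/
noncomputable def evalMap (F : Type*) [Field F] (n : ℕ) :
    MvPolynomial (Fin (2 * n)) F →ₗ[F] ((Fin n → Bool) → F) where
  toFun p := fun s => eval (aPt n s) p
  map_add' p q := by funext s; simp
  map_smul' c p := by funext s; simp [smul_eval]

@[simp] lemma evalMap_apply (F : Type*) [Field F] (n : ℕ)
    (p : MvPolynomial (Fin (2 * n)) F) (s : Fin n → Bool) :
    evalMap F n p s = eval (aPt n s) p := rfl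

end InvQAux

open InvQAux

/-- coefficient-dimension lower bound for `Q`. Let `F` have characteristic
`0` or at least `5`, `n ≥ 1`, `β ∉ {−1,0,1}`, and let `f` be multilinear and agree with `1/Q`
on the Boolean cube. Write `f = ∑_{B ⊆ [2n]} g_B(x̄)·y_B` with each `g_B ∈ F[x_1,…,x_{2n}]`
multilinear (this decomposition is unique). Then the `F`-linear span of `{g_B : B ⊆ [2n]}`
has dimension at least `2^n`. -/
theorem coefficient_space_dimension_lower_bound_of_inverse_of_Q
    (F : Type*) [Field F] (n : ℕ) (hn : 1 ≤ n)
    (hchar : ringChar F = 0 ∨ 5 ≤ ringChar F)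
    (β : F) (hβ : β ∉ ({-1, 0, 1} : Set F))
    (f : MvPolynomial (Fin (2 * n) ⊕ Fin (2 * n)) F)
    (hml : ∀ v, f.degreeOf v ≤ 1)
    (hf : ∀ a b : Fin (2 * n) → F, (∀ i, a i = 0 ∨ a i = 1) → (∀ i, b i = 0 ∨ b i = 1) →
      eval (Sum.elim a b) f * eval (Sum.elim a b) (Qtilde F n - C β) = 1)
    (g : Finset (Fin (2 * n)) → MvPolynomial (Fin (2 * n)) F)
    (hgml : ∀ B, ∀ i, (g B).degreeOf i ≤ 1)
    (hdecomp : f = ∑ B : Finset (Fin (2 * n)),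
      rename Sum.inl (g B) * ∏ i ∈ B, X (Sum.inr i)) :
    2 ^ n ≤ Module.finrank F ↥(Submodule.span F (Set.range g)) := by
  classical
  simp only [Set.mem_insert_iff, Set.mem_singleton_iff, not_or] at hβ
  obtain ⟨hβm1, hβ0, hβ1⟩ := hβ
  have h1β : (1 : F) - β ≠ 0 := sub_ne_zero.mpr (fun h => hβ1 h.symm)
  obtain ⟨α, hαdef⟩ : ∃ x : F, x = (β * (1 - β))⁻¹ := ⟨_, rfl⟩
  obtain ⟨γ, hγdef⟩ : ∃ x : F, x = -β⁻¹ := ⟨_, rfl⟩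
  obtain ⟨p, hpdef⟩ : ∃ x : F, x = β * (1 - β) := ⟨_, rfl⟩
  obtain ⟨q, hqdef⟩ : ∃ x : F, x = (1 - β) ^ 2 := ⟨_, rfl⟩
  have e1 : α * (1 - β) + γ = 0 := by
    rw [hαdef, hγdef, mul_inv]; field_simp; ring
  have e2 : -(γ * β) = 1 := by rw [hγdef]; field_simp
  have e3 : α * p = 1 := by
    rw [hαdef, hpdef]; exact inv_mul_cancel₀ (mul_ne_zero hβ0 h1β)
  have e4 : α * q + γ * p + γ * q = 0 := by
    rw [hαdef, hγdef, hpdef, hqdef, mul_inv]; field_simp; ring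
  obtain ⟨N, hNdef⟩ : ∃ x : (Fin n → Bool) → (Fin n → Bool) → F,
    x = fun s t => eval (Sum.elim (aPt n s) (bPt n t)) f := ⟨_, rfl⟩
  obtain ⟨P, hPdef⟩ : ∃ x : (Fin n → Bool) → (Fin n → Bool) → F,
    x = fun s t => ∏ i, dd (s i) (t i) := ⟨_, rfl⟩
  obtain ⟨M, hMdef⟩ : ∃ x : (Fin n → Bool) → (Fin n → Bool) → F,
    x = fun t u => p * ∏ i, ee (t i) (u i) + q * ∏ i, (zf (t i) * zf (u i)) := ⟨_, rfl⟩
  have hPP : ∀ s t, P s t * P s t = P s t := by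
    intro s t
    rw [hPdef]
    simp only
    rw [← Finset.prod_mul_distrib]
    apply Finset.prod_congr rfl
    intro i _
    cases s i <;> cases t i <;> simp [dd]
  have hNval : ∀ s t, N s t = α * P s t + γ := by
    intro s t
    have h : N s t * (P s t - β) = 1 := by
      rw [hNdef, hPdef]
      have h' := hf (aPt n s) (bPt n t) (aPt_bool n s) (bPt_bool n t)
      rw [map_sub, eval_C, eval_Qtilde] at h'
      exact h'
    have key : (α * P s t + γ) * (P s t - β) = 1 := by
      have expand : (α * P s t + γ) * (P s t - β)
          = α * (P s t * P s t) + (α * (1 - β) + γ) * P s t - α * P s t - γ * β := by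
        ring
      rw [expand, hPP s t, e1]
      linear_combination e2
    have hne : P s t - β ≠ 0 := by
      intro h0
      rw [h0, mul_zero] at h
      exact one_ne_zero h.symm
    exact mul_right_cancel₀ hne (h.trans key.symm)
  have hNM : ∀ s u, ∑ t, N s t * M t u = if s = u then 1 else 0 := by
    intro s u
    have hterm : ∀ t, N s t * M t u =
        α * p * (∏ i, dd (s i) (t i) * ee (t i) (u i))
        + (α * q * (∏ i, dd (s i) (t i) * (zf (t i) * zf (u i)))
        + (γ * p * (∏ i, ee (t i) (u i)) + γ * q * (∏ i, zf (t i) * zf (u i)))) := by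
      intro t
      rw [hNval s t, hPdef, hMdef]
      simp only [Finset.prod_mul_distrib]
      ring
    rw [Finset.sum_congr rfl (fun t _ => hterm t), Finset.sum_add_distrib,
      Finset.sum_add_distrib, Finset.sum_add_distrib,
      ← Finset.mul_sum, ← Finset.mul_sum, ← Finset.mul_sum, ← Finset.mul_sum]
    have S1 : ∑ t : Fin n → Bool, ∏ i, dd (s i) (t i) * ee (t i) (u i)
        = (if s = u then (1 : F) else 0) := by
      rw [sum_pi_prod (fun i c => dd (s i) c * ee c (u i)), ← prod_delta s u]
      apply Finset.prod_congr rfl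
      intro i _
      cases s i <;> cases u i <;> simp [dd, ee]
    have S2 : ∑ t : Fin n → Bool, ∏ i, dd (s i) (t i) * (zf (t i) * zf (u i))
        = ∏ i, (zf (u i) : F) := by
      rw [sum_pi_prod (fun i c => dd (s i) c * (zf c * zf (u i)))]
      apply Finset.prod_congr rfl
      intro i _
      cases s i <;> cases u i <;> simp [dd, zf]
    have S3 : ∑ t : Fin n → Bool, ∏ i, ee (t i) (u i) = ∏ i, (zf (u i) : F) := by
      rw [sum_pi_prod (fun i c => ee c (u i))]
      apply Finset.prod_congr rfl
      intro i _
      cases u i <;> simp [ee, zf]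
    have S4 : ∑ t : Fin n → Bool, ∏ i, zf (t i) * zf (u i) = ∏ i, (zf (u i) : F) := by
      rw [sum_pi_prod (fun i c => zf c * zf (u i))]
      apply Finset.prod_congr rfl
      intro i _
      cases u i <;> simp [zf]
    rw [S1, S2, S3, S4]
    have collect : α * q * (∏ i, zf (u i)) + (γ * p * (∏ i, zf (u i)) + γ * q * (∏ i, zf (u i)))
        = (α * q + γ * p + γ * q) * ∏ i, zf (u i) := by ring
    rw [collect, e4, zero_mul, add_zero, e3, one_mul]
  -- columns of N lie in the span of the evaluated coefficient polynomials
  have hcol : ∀ t, (fun s => N s t) ∈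
      Submodule.span F (Set.range (fun B => evalMap F n (g B))) := by
    intro t
    have hexp : (fun s => N s t)
        = ∑ B : Finset (Fin (2 * n)), (∏ i ∈ B, bPt (F := F) n t i) • evalMap F n (g B) := by
      funext s
      rw [hNdef]
      simp only
      rw [hdecomp, map_sum, Finset.sum_apply]
      apply Finset.sum_congr rfl
      intro B _
      rw [map_mul, eval_rename, Sum.elim_comp_inl, map_prod]
      simp only [eval_X, Sum.elim_inr, Pi.smul_apply, smul_eq_mul, evalMap_apply]
      ring
    rw [hexp]
    exact Submodule.sum_mem _ fun B _ =>
      Submodule.smul_mem _ _ (Submodule.subset_span ⟨B, rfl⟩)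
  have htop : ⊤ ≤ Submodule.span F (Set.range (fun B => evalMap F n (g B))) := by
    intro v _
    rw [pi_eq_sum_univ v]
    apply Submodule.sum_mem
    intro u _
    apply Submodule.smul_mem
    have hbasis : (fun s => if u = s then (1 : F) else 0)
        = ∑ t, M t u • (fun s => N s t) := by
      funext s
      rw [Finset.sum_apply]
      simp only [Pi.smul_apply, smul_eq_mul]
      rw [show ∑ t, M t u * N s t = ∑ t, N s t * M t u from
        Finset.sum_congr rfl (fun t _ => mul_comm _ _), hNM s u]
      by_cases h : s = u
      · subst h; simp
      · rw [if_neg h, if_neg (fun hh => h hh.symm)]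
    rw [hbasis]
    exact Submodule.sum_mem _ fun t _ => Submodule.smul_mem _ _ (hcol t)
  have hmap : Submodule.map (evalMap F n) (Submodule.span F (Set.range g)) = ⊤ := by
    rw [Submodule.map_span, ← Set.range_comp]
    exact top_le_iff.mp htop
  have fin1 : FiniteDimensional F (Submodule.span F (Set.range g)) :=
    FiniteDimensional.span_of_finite F (Set.finite_range g)
  have hle := Submodule.finrank_map_le (evalMap F n) (Submodule.span F (Set.range g))
  rw [hmap] at hle
  have hcard : Module.finrank F (⊤ : Submodule F ((Fin n → Bool) → F)) = 2 ^ n := by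
    rw [finrank_top, Module.finrank_pi, Fintype.card_fun]
    simp
  rw [hcard] at hle
  exact hle
end

section
/- Let F be a field, let f ∈ F[x_1,…,x_n, y_1,…,y_m], and write f uniquely as f = ∑_{b ∈ ℕ^m} f_b(x̄) · ȳ^b with f_b ∈ F[x_1,…,x_n]. Then for every subset S ⊆ F and every point c ∈ S^m, the partial evaluation f(x̄, c) ∈ F[x_1,…,x_n] lies in the F-linear span of { f_b : b ∈ ℕ^m }. Consequently, dim span_F { f(x̄, c) : c ∈ S^m } ≤ dim span_F { f_b : b ∈ ℕ^m }; and if moreover |S| is strictly greater than the individual degree of every variable y_j in f, then these two dimensions are equal. -/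
open MvPolynomial

/-- The partial evaluation `f(x̄, c)` of `f ∈ F[x_1,…,x_n, y_1,…,y_m]` at the point `c` in the
`y`-variables: the `F`-algebra map sending `x_i ↦ x_i` and `y_j ↦ c j`. -/
noncomputable def partialEvalY {F : Type*} [Field F] {n m : ℕ} (c : Fin m → F)
    (f : MvPolynomial (Fin n ⊕ Fin m) F) : MvPolynomial (Fin n) F :=
  aeval (Sum.elim X fun j => C (c j)) f

private lemma evalY_formula {F : Type*} [Field F] {n m : ℕ}
    (g : (Fin m →₀ ℕ) →₀ MvPolynomial (Fin n) F) (c : Fin m → F) :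
    partialEvalY c (g.sum fun b p => rename Sum.inl p * monomial (b.mapDomain Sum.inr) (1 : F))
      = g.sum fun b p => (∏ j, c j ^ b j) • p := by
  unfold partialEvalY
  rw [Finsupp.sum, map_sum, Finsupp.sum]
  refine Finset.sum_congr rfl fun b _ => ?_
  rw [map_mul, aeval_rename, aeval_monomial, map_one, one_mul,
    Finsupp.prod_mapDomain_index_inj Sum.inr_injective]
  have h1 : aeval ((Sum.elim X fun j => C (c j)) ∘ Sum.inl) (g b) = g b := by
    simp [Function.comp_def]
  rw [h1]
  have h2 : (b.prod fun j k => Sum.elim X (fun j => C (c j)) (Sum.inr j) ^ k)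
      = (C (∏ j, c j ^ b j) : MvPolynomial (Fin n) F) := by
    simp only [Sum.elim_inr, ← C_pow, ← Finsupp.prod_pow, Finsupp.prod, map_prod]
  rw [h2, mul_comm, ← smul_eq_C_mul]

private lemma interp {F : Type*} [Field F] {M : Type*} [AddCommGroup M] [Module F M]
    {m D : ℕ} (e : Fin (D + 1) → F) (he : Function.Injective e)
    (v : (Fin m →₀ ℕ) →₀ M) (hv : ∀ b ∈ v.support, ∀ j, b j ≤ D)
    (W : Submodule F M)
    (hW : ∀ t : Fin m → Fin (D + 1),
      (v.sum fun b p => (∏ j, e (t j) ^ b j) • p) ∈ W)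
    (b₀ : Fin m →₀ ℕ) : v b₀ ∈ W := by
  classical
  by_cases hb₀ : b₀ ∈ v.support
  swap
  · rw [Finsupp.notMem_support_iff.mp hb₀]; exact W.zero_mem
  set V : Matrix (Fin (D + 1)) (Fin (D + 1)) F := Matrix.vandermonde e with hV
  have hdet : IsUnit V.det := by
    rw [isUnit_iff_ne_zero, hV, Matrix.det_vandermonde]
    refine Finset.prod_ne_zero_iff.mpr fun i _ => Finset.prod_ne_zero_iff.mpr fun j hj => ?_
    exact sub_ne_zero_of_ne fun h => absurd (he h).symm (Finset.mem_Ioi.mp hj).ne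
  have hinv : V⁻¹ * V = 1 := Matrix.nonsing_inv_mul V hdet
  set β : (Fin m →₀ ℕ) → Fin m → Fin (D + 1) :=
    fun b j => ⟨min (b j) D, Nat.lt_succ_of_le (min_le_right _ _)⟩ with hβ
  have hβeq : ∀ b ∈ v.support, ∀ j, ((β b j : ℕ)) = b j := fun b hb j => by
    simp [hβ, Nat.min_eq_left (hv b hb j)]
  have key : ∀ b ∈ v.support,
      (∑ t : Fin m → Fin (D + 1),
        (∏ j, V⁻¹ (β b₀ j) (t j)) * ∏ j, e (t j) ^ b j)
        = if b = b₀ then 1 else 0 := by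
    intro b hb
    have h1 : ∀ t : Fin m → Fin (D + 1),
        (∏ j, V⁻¹ (β b₀ j) (t j)) * ∏ j, e (t j) ^ b j
          = ∏ j, V⁻¹ (β b₀ j) (t j) * V (t j) (β b j) := by
      intro t
      rw [← Finset.prod_mul_distrib]
      refine Finset.prod_congr rfl fun j _ => ?_
      congr 1
      have hb' : ((β b j : ℕ)) = b j := hβeq b hb j
      rw [hV]
      simp only [Matrix.vandermonde]
      rw [Matrix.of_apply, hb']
    simp_rw [h1]
    rw [← Fintype.prod_sum fun (j : Fin m) (k : Fin (D + 1)) => V⁻¹ (β b₀ j) k * V k (β b j)]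
    have h2 : ∀ j, (∑ k, V⁻¹ (β b₀ j) k * V k (β b j))
        = (1 : Matrix (Fin (D + 1)) (Fin (D + 1)) F) (β b₀ j) (β b j) := by
      intro j; rw [← hinv, Matrix.mul_apply]
    simp_rw [h2, Matrix.one_apply]
    by_cases hbb : b = b₀
    · subst hbb; simp
    · have : ∃ j, b j ≠ b₀ j := by
        by_contra h
        push_neg at h
        exact hbb (Finsupp.ext h)
      obtain ⟨j, hj⟩ := this
      rw [if_neg hbb]
      refine Finset.prod_eq_zero (Finset.mem_univ j) ?_
      rw [if_neg]
      intro h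
      apply hj
      have := congrArg (Fin.val) h
      rwa [hβeq b₀ hb₀ j, hβeq b hb j, eq_comm] at this
  have key2 : v b₀ = ∑ t : Fin m → Fin (D + 1), (∏ j, V⁻¹ (β b₀ j) (t j)) •
      (v.sum fun b p => (∏ j, e (t j) ^ b j) • p) := by
    have h3 : ∀ t : Fin m → Fin (D + 1), (∏ j, V⁻¹ (β b₀ j) (t j)) •
        (v.sum fun b p => (∏ j, e (t j) ^ b j) • p)
        = ∑ b ∈ v.support, ((∏ j, V⁻¹ (β b₀ j) (t j)) * ∏ j, e (t j) ^ b j) • v b := by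
      intro t
      rw [Finsupp.sum, Finset.smul_sum]
      exact Finset.sum_congr rfl fun b _ => by rw [smul_smul]
    simp_rw [h3]
    rw [Finset.sum_comm]
    have h4 : ∀ b ∈ v.support,
        (∑ t : Fin m → Fin (D + 1), ((∏ j, V⁻¹ (β b₀ j) (t j)) * ∏ j, e (t j) ^ b j) • v b)
        = (if b = b₀ then (1 : F) else 0) • v b := by
      intro b hb
      rw [← Finset.sum_smul, key b hb]
    rw [Finset.sum_congr rfl h4]
    simp only [ite_smul, one_smul, zero_smul]
    rw [Finset.sum_ite_eq' v.support b₀ (fun b => v b), if_pos hb₀]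
  rw [key2]
  exact Submodule.sum_mem _ fun t _ => W.smul_mem _ (hW t)

private lemma supp_deg {F : Type*} [Field F] {n m : ℕ}
    (g : (Fin m →₀ ℕ) →₀ MvPolynomial (Fin n) F)
    {b : Fin m →₀ ℕ} (hb : b ∈ g.support) (j : Fin m) :
    b j ≤ (g.sum fun b p =>
      rename Sum.inl p * monomial (b.mapDomain Sum.inr) (1 : F)).degreeOf (Sum.inr j) := by
  classical
  obtain ⟨a, ha⟩ : (g b).support.Nonempty :=
    Finset.nonempty_iff_ne_empty.mpr (mt MvPolynomial.support_eq_empty.mp (Finsupp.mem_support_iff.mp hb))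
  set u : (Fin n ⊕ Fin m) →₀ ℕ := a.mapDomain Sum.inl + b.mapDomain Sum.inr with hu
  have huinr : ∀ j' : Fin m, u (Sum.inr j') = b j' := by
    intro j'
    rw [hu, Finsupp.add_apply, Finsupp.mapDomain_notin_range _ _ (by simp),
      Finsupp.mapDomain_apply Sum.inr_injective, zero_add]
  have hcoeff : coeff u (g.sum fun b p =>
      rename Sum.inl p * monomial (b.mapDomain Sum.inr) (1 : F)) = coeff a (g b) := by
    rw [Finsupp.sum, MvPolynomial.coeff_sum]
    rw [Finset.sum_eq_single b]
    · rw [coeff_mul_monomial', if_pos (by rw [hu]; exact le_add_self), mul_one, hu,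
        add_tsub_cancel_right, coeff_rename_mapDomain _ Sum.inl_injective]
    · intro b' hb' hne
      rw [coeff_mul_monomial']
      split_ifs with hle
      · rw [mul_one]
        apply coeff_rename_eq_zero
        intro w hw
        exfalso
        apply hne
        ext j'
        have hle' : b' j' ≤ b j' := by
          have := hle (Sum.inr j')
          rwa [Finsupp.mapDomain_apply Sum.inr_injective, huinr j'] at this
        have h0 : (u - b'.mapDomain Sum.inr : (Fin n ⊕ Fin m) →₀ ℕ) (Sum.inr j') = 0 := by
          rw [← hw, Finsupp.mapDomain_notin_range _ _ (by simp)]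
        rw [Finsupp.tsub_apply, huinr j', Finsupp.mapDomain_apply Sum.inr_injective] at h0
        omega
      · rfl
    · intro h
      exact absurd (Finsupp.mem_support_iff.mp hb) (by simpa using h)
  have hu_supp : u ∈ (g.sum fun b p =>
      rename Sum.inl p * monomial (b.mapDomain Sum.inr) (1 : F)).support := by
    rw [mem_support_iff, hcoeff]
    exact MvPolynomial.mem_support_iff.mp ha
  rw [degreeOf_eq_sup]
  calc b j = u (Sum.inr j) := (huinr j).symm
    _ ≤ _ := Finset.le_sup (f := fun s => s (Sum.inr j)) hu_supp

/-- evaluation dimension lower bounds coefficient dimension. Write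
`f ∈ F[x̄, ȳ]` uniquely as `f = ∑_b f_b(x̄)·ȳ^b` (the family `g` below, which is uniquely
determined by the displayed identity). Then for every `S ⊆ F` and every `c ∈ S^m`, the
partial evaluation `f(x̄, c)` lies in `span_F {f_b}`; consequently
`dim span {f(x̄,c) : c ∈ S^m} ≤ dim span {f_b}`, with equality whenever `|S|` exceeds the
individual degree of every `y`-variable in `f`. -/
theorem evaluation_dimension_le_coefficient_dimension
    (F : Type*) [Field F] (n m : ℕ)
    (f : MvPolynomial (Fin n ⊕ Fin m) F)
    (g : (Fin m →₀ ℕ) →₀ MvPolynomial (Fin n) F)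
    (hdecomp : f = g.sum fun b p =>
      rename Sum.inl p * monomial (b.mapDomain Sum.inr) (1 : F))
    (S : Set F) :
    (∀ c : Fin m → F, (∀ j, c j ∈ S) →
      partialEvalY c f ∈ Submodule.span F (Set.range ⇑g)) ∧
    Module.rank F ↥(Submodule.span F
        {p : MvPolynomial (Fin n) F | ∃ c : Fin m → F, (∀ j, c j ∈ S) ∧ p = partialEvalY c f})
      ≤ Module.rank F ↥(Submodule.span F (Set.range ⇑g)) ∧
    ((∀ j : Fin m, (f.degreeOf (Sum.inr j) : Cardinal) < Cardinal.mk S) →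
      Module.rank F ↥(Submodule.span F
          {p : MvPolynomial (Fin n) F | ∃ c : Fin m → F, (∀ j, c j ∈ S) ∧ p = partialEvalY c f})
        = Module.rank F ↥(Submodule.span F (Set.range ⇑g))) := by
  classical
  have hform : ∀ c : Fin m → F,
      partialEvalY c f = g.sum fun b p => (∏ j, c j ^ b j) • p := by
    intro c; rw [hdecomp]; exact evalY_formula g c
  set G := Submodule.span F (Set.range ⇑g) with hG
  set E := Submodule.span F
    {p : MvPolynomial (Fin n) F | ∃ c : Fin m → F, (∀ j, c j ∈ S) ∧ p = partialEvalY c f} with hE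
  have part1 : ∀ c : Fin m → F, (∀ j, c j ∈ S) → partialEvalY c f ∈ G := by
    intro c _
    rw [hform c, Finsupp.sum]
    exact Submodule.sum_mem _ fun b _ => Submodule.smul_mem _ _
      (Submodule.subset_span ⟨b, rfl⟩)
  have hle : E ≤ G := by
    rw [hE, Submodule.span_le]
    rintro p ⟨c, hc, rfl⟩
    exact part1 c hc
  refine ⟨part1, Submodule.rank_mono hle, fun hcard => ?_⟩
  set D : ℕ := Finset.univ.sup (fun j : Fin m => f.degreeOf (Sum.inr j)) with hD
  obtain ⟨e, he, hes⟩ :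
      ∃ e : Fin (D + 1) → F, Function.Injective e ∧ (m = 0 ∨ ∀ i, e i ∈ S) := by
    rcases Nat.eq_zero_or_pos m with hm | hm
    · refine ⟨fun _ => 0, ?_, Or.inl hm⟩
      have hD0 : D = 0 := by
        rw [hD]
        subst hm
        simp
      intro x y _
      have hx := x.isLt
      have hy := y.isLt
      exact Fin.ext (by omega)
    · have : Nonempty (Fin m) := ⟨⟨0, hm⟩⟩
      obtain ⟨j₀, -, hj₀⟩ := Finset.exists_mem_eq_sup Finset.univ Finset.univ_nonempty
        (fun j : Fin m => f.degreeOf (Sum.inr j))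
      have hDS : (D : Cardinal) < Cardinal.mk S := by rw [hD, hj₀]; exact hcard j₀
      have hle' : ((D + 1 : ℕ) : Cardinal) ≤ Cardinal.mk S := by
        push_cast
        exact (Cardinal.add_one_le_succ _).trans (Order.succ_le_of_lt hDS)
      have hemb : Nonempty (Fin (D + 1) ↪ ↥S) := by
        apply Cardinal.lift_mk_le'.mp
        rw [Cardinal.mk_fin, Cardinal.lift_natCast, Cardinal.lift_uzero]
        exact_mod_cast hle'
      obtain ⟨emb⟩ := hemb
      exact ⟨fun i => (emb i : F), Subtype.coe_injective.comp emb.injective,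
        Or.inr fun i => (emb i).2⟩
  have hge : G ≤ E := by
    rw [hG, Submodule.span_le]
    rintro p ⟨b, rfl⟩
    refine interp e he g (fun b' hb' j => ?_) E (fun t => ?_) b
    · have h1 := supp_deg g hb' j
      rw [← hdecomp] at h1
      exact h1.trans (by rw [hD]; exact Finset.le_sup (f := fun j : Fin m => degreeOf (Sum.inr j) f) (Finset.mem_univ j))
    · have h2 := evalY_formula g (fun j => e (t j))
      rw [← hdecomp] at h2
      rw [← h2]
      apply Submodule.subset_span
      refine ⟨fun j => e (t j), fun j => ?_, rfl⟩
      rcases hes with hm | hes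
      · exact absurd j.isLt (by omega)
      · exact hes (t j)
  rw [le_antisymm hle hge]
end
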